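/- arXiv:1408.1058 — 5 statements merged into one kernel-verified Lean document; each statement's English description precedes it below -/
import Mathlib

section
/- Let n be a positive integer with n ≡ 2 (mod 4). Then for every 2-coloring χ : Z_n → {0,1}, the number of monochromatic 3-term arithmetic progressions in Z_n is even. -/
/-- The set of 3-term arithmetic progressions in `ZMod n`, as 3-element sets
`{a, a+b, a+2b}` with `b ≠ 0` and all elements distinct, each counted once. -/
def apSets (n : ℕ) [NeZero n] : Finset (Finset (ZMod n)) :=
  Finset.univ.filter (fun s =>
    (∃ a b : ZMod n, b ≠ 0 ∧ s = {a, a + b, a + 2 * b}) ∧ s.card = 3)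

/-- The number of monochromatic 3-term APs in `ZMod n` under the 2-coloring `χ`. -/
def monoAPCount (n : ℕ) [NeZero n] (χ : ZMod n → Fin 2) : ℕ :=
  ((apSets n).filter (fun s => ∀ x ∈ s, ∀ y ∈ s, χ x = χ y)).card

open Finset

namespace Stmt5Aux

set_option linter.unusedSectionVars false

/-- half point -/
def gam (n : ℕ) : ZMod n := ((n / 2 : ℕ) : ZMod n)

/-- indicator embedding of colors -/
def iota (a : Fin 2) : ZMod 2 := (a.val : ZMod 2)

lemma iota_if (a b : Fin 2) : (if a = b then (1 : ZMod 2) else 0) = 1 + iota a + iota b := by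
  revert a b; decide

lemma iota_ne (a b : Fin 2) (h : a ≠ b) : iota a + iota b = 1 := by revert a b; decide

lemma fin2_eq (a b c : Fin 2) (h1 : a ≠ c) (h2 : b ≠ c) : a = b := by revert a b c; decide

lemma sq_self (a : ZMod 2) : a * a = a := by revert a; decide

lemma iota_if_ne (a b : Fin 2) : (if a ≠ b then (1 : ZMod 2) else 0) = iota a + iota b := by
  revert a b; decide

lemma mul_succ_self (a : ZMod 2) : a * (a + 1) = 0 := by revert a; decide

lemma two_eq_zero : (2 : ZMod 2) = 0 := by decide

section basic
variable {n : ℕ} [NeZero n] (hn : n % 4 = 2)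

lemma natCast_val_self (x : ZMod n) : ((x.val : ℕ) : ZMod n) = x := by
  simp [ZMod.natCast_val, ZMod.cast_id]

include hn

lemma gam_add_gam : gam n + gam n = 0 := by
  have h : (n / 2) + (n / 2) = n := by omega
  rw [gam, ← Nat.cast_add, h, ZMod.natCast_self]

lemma gam_ne_zero : gam n ≠ 0 := by
  rw [gam, Ne, ZMod.natCast_eq_zero_iff]
  intro h
  have h1 : 0 < n / 2 := by omega
  have := Nat.le_of_dvd h1 h
  omega

lemma torsion (x : ZMod n) (hx : x + x = 0) : x = 0 ∨ x = gam n := by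
  have hv : (x + x).val = (x.val + x.val) % n := ZMod.val_add x x
  rw [hx, ZMod.val_zero] at hv
  have hlt : x.val < n := ZMod.val_lt x
  have hcase : x.val + x.val = 0 ∨ x.val + x.val = n := by
    rcases Nat.lt_or_ge (x.val + x.val) n with h | h
    · rw [Nat.mod_eq_of_lt h] at hv; omega
    · have h1 : x.val + x.val - n < n := by omega
      rw [Nat.mod_eq_sub_mod h, Nat.mod_eq_of_lt h1] at hv
      omega
  have : x.val = 0 ∨ x.val = n / 2 := by omega
  rcases this with h | h
  · left
    have := natCast_val_self x
    rw [h] at this; simpa using this.symm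
  · right
    have := natCast_val_self x
    rw [h] at this; rw [← this, gam]

lemma torsion' (x y : ZMod n) (hx : x + x = y + y) : x = y ∨ x = y + gam n := by
  have : (x - y) + (x - y) = 0 := by linear_combination hx
  rcases torsion hn _ this with h | h
  · left; linear_combination h
  · right; linear_combination h

lemma add_gam_ne (y : ZMod n) : y + gam n ≠ y := by
  intro h
  exact gam_ne_zero hn (by linear_combination h)

lemma two_mul_add_gam (x : ZMod n) : 2 * (x + gam n) = 2 * x := by
  have := gam_add_gam hn
  ring_nf
  linear_combination this

end basic

lemma card3_distinct {α : Type*} [DecidableEq α] {x y z : α}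
    (h : ({x, y, z} : Finset α).card = 3) : x ≠ y ∧ x ≠ z ∧ y ≠ z := by
  have hp2 : ∀ u v : α, ({u, v} : Finset α).card ≤ 2 := by
    intro u v
    exact (Finset.card_insert_le _ _).trans (by simp)
  refine ⟨?_, ?_, ?_⟩ <;> intro he
  · have hsub : ({x, y, z} : Finset α) ⊆ {y, z} := by
      intro t ht; simp [he] at ht ⊢; tauto
    have := (Finset.card_le_card hsub).trans (hp2 y z); omega
  · have hsub : ({x, y, z} : Finset α) ⊆ {y, z} := by
      intro t ht; simp [he] at ht ⊢; tauto
    have := (Finset.card_le_card hsub).trans (hp2 y z); omega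
  · have hsub : ({x, y, z} : Finset α) ⊆ {x, z} := by
      intro t ht; simp [he] at ht ⊢; tauto
    have := (Finset.card_le_card hsub).trans (hp2 x z); omega


section main2
variable {n : ℕ} [NeZero n] (χ : ZMod n → Fin 2)

def Wlt : Finset (ZMod n × ZMod n) :=
  univ.filter fun p => χ p.1 = χ p.2 ∧ χ p.1 = χ (2 * p.2 - p.1) ∧
    p.1.val < (2 * p.2 - p.1).val

/-- total color sum -/
def Ssum : ZMod 2 := ∑ x : ZMod n, iota (χ x)

def Y3 : Finset (ZMod n × ZMod n) :=
  univ.filter fun p => χ p.1 = χ (2 * p.2 - p.1) ∧ p.1.val < (2 * p.2 - p.1).val ∧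
    χ p.2 ≠ χ (p.2 + gam n) ∧ p.2.val < (p.2 + gam n).val

lemma fiber_card_eq (hn : n % 4 = 2)
    (tors' : ∀ x y : ZMod n, x + x = y + y → x = y ∨ x = y + gam n)
    (hgg : gam n + gam n = 0)
    (hgne : ∀ y : ZMod n, y + gam n ≠ y)
    (y : ZMod n) (hy : χ y ≠ χ (y + gam n)) :
    (((univ : Finset (ZMod n)).filter
      (fun x => χ x = χ (2 * y - x) ∧ x.val < (2 * y - x).val)).card : ZMod 2)
      = Ssum χ + 1 := by
  classical
  set T : Finset (ZMod n) := univ.filter (fun x => x.val < (2 * y - x).val) with hT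
  set T' : Finset (ZMod n) := univ.filter (fun x => (2 * y - x).val < x.val) with hT'
  have hrefl : ∀ x : ZMod n, 2 * y - (2 * y - x) = x := fun x => by ring
  have hfixy : 2 * y - y = y := by ring
  have hfixy' : 2 * y - (y + gam n) = y + gam n := by linear_combination -hgg
  have hF : (univ : Finset (ZMod n)).filter
      (fun x => χ x = χ (2 * y - x) ∧ x.val < (2 * y - x).val)
      = T.filter (fun x => χ x = χ (2 * y - x)) := by
    rw [hT, filter_filter]
    apply filter_congr; intro x _; tauto
  rw [hF, card_filter]
  push_cast
  have hcast : ∀ x ∈ T, ((if χ x = χ (2 * y - x) then (1:ZMod 2) else 0))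
      = 1 + iota (χ x) + iota (χ (2 * y - x)) := fun x _ => iota_if _ _
  rw [Finset.sum_congr rfl hcast]
  rw [Finset.sum_add_distrib, Finset.sum_add_distrib, Finset.sum_const]
  have hmapTT' : ∀ a ∈ T, 2 * y - a ∈ T' := by
    intro a ha
    simp only [hT, hT', mem_filter, mem_univ, true_and] at ha ⊢
    rw [hrefl]; exact ha
  have hmapT'T : ∀ a ∈ T', 2 * y - a ∈ T := by
    intro a ha
    simp only [hT, hT', mem_filter, mem_univ, true_and] at ha ⊢
    rw [hrefl]; exact ha
  have hb : ∑ x ∈ T, iota (χ (2 * y - x)) = ∑ x ∈ T', iota (χ x) := by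
    apply Finset.sum_nbij' (fun x => 2 * y - x) (fun x => 2 * y - x)
      hmapTT' hmapT'T (fun a _ => hrefl a) (fun a _ => hrefl a)
    intro a _; rfl
  rw [hb]
  have hxx : ∀ x : ZMod n, ¬ x.val < (2*y-x).val ↔ ((2*y-x).val < x.val ∨ x = y ∨ x = y + gam n) := by
    intro x
    constructor
    · intro h
      rcases Nat.lt_or_ge (2*y-x).val x.val with h1 | h1
      · exact Or.inl h1
      · have hveq : x.val = (2*y-x).val := by omega
        have hxeq : x = 2*y-x := ZMod.val_injective n hveq
        have hss : x + x = y + y := by linear_combination hxeq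
        exact Or.inr (tors' x y hss)
    · intro h
      rcases h with h | h | h
      · omega
      · intro hlt; rw [h, hfixy] at hlt; exact lt_irrefl _ hlt
      · intro hlt; rw [h, hfixy'] at hlt; exact lt_irrefl _ hlt
  have hpart : (univ : Finset (ZMod n)).filter (fun x => ¬ x.val < (2*y-x).val)
      = T' ∪ {y, y + gam n} := by
    ext x
    simp only [mem_filter, mem_univ, true_and, mem_union, mem_insert, mem_singleton, hT']
    rw [hxx x]
  have hdisj : Disjoint T' ({y, y + gam n} : Finset (ZMod n)) := by
    rw [Finset.disjoint_right]
    intro a ha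
    simp only [mem_insert, mem_singleton] at ha
    simp only [hT', mem_filter, mem_univ, true_and]
    rcases ha with h | h
    · intro hlt; rw [h, hfixy] at hlt; exact lt_irrefl _ hlt
    · intro hlt; rw [h, hfixy'] at hlt; exact lt_irrefl _ hlt
  have hyne : y ≠ y + gam n := fun h => hgne y h.symm
  have hcardT : ((T.card : ℕ) : ZMod 2) = 0 := by
    have h1 : T.card + ((univ : Finset (ZMod n)).filter (fun x => ¬ x.val < (2*y-x).val)).card
        = Fintype.card (ZMod n) := by
      rw [hT]; exact Finset.card_filter_add_card_filter_not _
    rw [hpart, card_union_of_disjoint hdisj, card_pair hyne, ZMod.card] at h1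
    have h2 : T.card = T'.card := by
      apply Finset.card_bij (fun a _ => 2 * y - a) hmapTT'
      · intro a _ b _ hab
        have := congrArg (fun t => 2*y - t) hab
        simpa [hrefl] using this
      · intro b hb2; exact ⟨2*y - b, hmapT'T b hb2, hrefl b⟩
    rw [ZMod.natCast_eq_zero_iff]
    omega
  have hsum : ∑ x ∈ T, iota (χ x) + ∑ x ∈ T', iota (χ x)
      + (iota (χ y) + iota (χ (y + gam n))) = Ssum χ := by
    have h1 := Finset.sum_filter_add_sum_filter_not (univ : Finset (ZMod n))
      (fun x => x.val < (2*y-x).val) (fun x => iota (χ x))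
    rw [hpart, Finset.sum_union hdisj, Finset.sum_pair hyne] at h1
    have h2 : Ssum χ = ∑ x : ZMod n, iota (χ x) := rfl
    rw [h2, ← h1, ← hT]
    ring
  rw [iota_ne _ _ hy] at hsum
  rw [nsmul_eq_mul, mul_one]
  linear_combination hcardT + hsum - two_eq_zero


lemma Y3_card_zero
    (fiber_card_eq : ∀ (y : ZMod n), χ y ≠ χ (y + gam n) →
      (((univ : Finset (ZMod n)).filter
        (fun x => χ x = χ (2 * y - x) ∧ x.val < (2 * y - x).val)).card : ZMod 2)
        = Ssum χ + 1)
    (hgg : gam n + gam n = 0)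
    (hgne : ∀ y : ZMod n, y + gam n ≠ y) :
    (((Y3 χ).card : ℕ) : ZMod 2) = 0 := by
  classical
  set D2 : Finset (ZMod n) :=
    univ.filter (fun y => χ y ≠ χ (y + gam n) ∧ y.val < (y + gam n).val) with hD2
  have hmapsnd : ∀ p ∈ Y3 χ, p.2 ∈ D2 := by
    intro p hp
    simp only [Y3, mem_filter, mem_univ, true_and] at hp
    simp only [hD2, mem_filter, mem_univ, true_and]
    exact ⟨hp.2.2.1, hp.2.2.2⟩
  have h1 : (Y3 χ).card = ∑ y ∈ D2, ((Y3 χ).filter (fun p => p.2 = y)).card :=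
    Finset.card_eq_sum_card_fiberwise hmapsnd
  have h2 : ∀ y ∈ D2, ((Y3 χ).filter (fun p => p.2 = y)).card
      = ((univ : Finset (ZMod n)).filter
        (fun x => χ x = χ (2 * y - x) ∧ x.val < (2 * y - x).val)).card := by
    intro y hyD
    simp only [hD2, mem_filter, mem_univ, true_and] at hyD
    apply Finset.card_bij (fun p (_ : p ∈ (Y3 χ).filter (fun p => p.2 = y)) => p.1)
    · intro p hp
      simp only [Y3, mem_filter, mem_univ, true_and] at hp
      obtain ⟨⟨hc, hv, _, _⟩, hsnd⟩ := hp
      simp only [mem_filter, mem_univ, true_and]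
      rw [← hsnd]; exact ⟨hc, hv⟩
    · intro p hp q hq hpq
      simp only [mem_filter] at hp hq
      exact Prod.ext hpq (hp.2.trans hq.2.symm)
    · intro x hx
      simp only [mem_filter, mem_univ, true_and] at hx
      refine ⟨(x, y), mem_filter.mpr ⟨?_, rfl⟩, rfl⟩
      simp only [Y3, mem_filter, mem_univ, true_and]
      exact ⟨hx.1, hx.2, hyD.1, hyD.2⟩
  have h3 : (((Y3 χ).card : ℕ) : ZMod 2) = ∑ y ∈ D2, (Ssum χ + 1) := by
    rw [h1]
    push_cast
    apply Finset.sum_congr rfl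
    intro y hyD
    rw [h2 y hyD]
    have hyD' := hyD
    simp only [hD2, mem_filter, mem_univ, true_and] at hyD'
    exact_mod_cast fiber_card_eq y hyD'.1
  -- now compute D2.card mod 2
  have haa : ∀ y : ZMod n, y + gam n + gam n = y := fun y => by linear_combination hgg
  set Q : Finset (ZMod n) := univ.filter (fun y => y.val < (y + gam n).val) with hQ
  set Q' : Finset (ZMod n) := univ.filter (fun y => (y + gam n).val < y.val) with hQ'
  have hDQ : D2 = Q.filter (fun y => χ y ≠ χ (y + gam n)) := by
    rw [hQ, filter_filter]
    apply filter_congr; intro x _; tauto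
  have hcast2 : ((D2.card : ℕ) : ZMod 2)
      = ∑ y ∈ Q, (iota (χ y) + iota (χ (y + gam n))) := by
    rw [hDQ, card_filter]
    push_cast
    apply Finset.sum_congr rfl
    intro y _
    exact iota_if_ne _ _
  have hbij : ∑ y ∈ Q, iota (χ (y + gam n)) = ∑ y ∈ Q', iota (χ y) := by
    apply Finset.sum_nbij' (fun y => y + gam n) (fun y => y + gam n)
    · intro a ha
      simp only [hQ, hQ', mem_filter, mem_univ, true_and] at ha ⊢
      rw [haa]; exact ha
    · intro a ha
      simp only [hQ, hQ', mem_filter, mem_univ, true_and] at ha ⊢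
      rw [haa]; exact ha
    · intro a _; exact haa a
    · intro a _; exact haa a
    · intro a _; rfl
  have hpartQ : (univ : Finset (ZMod n)).filter (fun y => ¬ y.val < (y + gam n).val) = Q' := by
    ext x
    simp only [mem_filter, mem_univ, true_and, hQ']
    constructor
    · intro h
      rcases Nat.lt_or_ge (x + gam n).val x.val with h1 | h1
      · exact h1
      · have hveq : x.val = (x + gam n).val := by omega
        exact absurd (ZMod.val_injective n hveq).symm (hgne x)
    · intro h; omega
  have hQsum : ∑ y ∈ Q, iota (χ y) + ∑ y ∈ Q', iota (χ y) = Ssum χ := by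
    have h1 := Finset.sum_filter_add_sum_filter_not (univ : Finset (ZMod n))
      (fun y => y.val < (y + gam n).val) (fun y => iota (χ y))
    rw [hpartQ] at h1
    rw [← hQ] at h1
    exact h1
  have hD2card : ((D2.card : ℕ) : ZMod 2) = Ssum χ := by
    rw [hcast2, Finset.sum_add_distrib, hbij, hQsum]
  rw [h3, Finset.sum_const, nsmul_eq_mul, hD2card, mul_succ_self]



lemma wlt_card_y3 (hgg : gam n + gam n = 0)
    (hgne : ∀ y : ZMod n, y + gam n ≠ y) :
    (((Wlt χ).card : ℕ) : ZMod 2) = (((Y3 χ).card : ℕ) : ZMod 2) := by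
  classical
  have haa : ∀ y : ZMod n, y + gam n + gam n = y := fun y => by linear_combination hgg
  have hz : ∀ a b : ZMod n, 2 * (a + gam n) - b = 2 * a - b := fun a b => by
    linear_combination hgg
  have hvne : ∀ y : ZMod n, (y + gam n).val ≠ y.val := by
    intro y h
    exact hgne y (ZMod.val_injective n h)
  set YD : Finset (ZMod n × ZMod n) :=
    (Wlt χ).filter (fun p => χ p.2 ≠ χ (p.2 + gam n)) with hYD
  set Yc : Finset (ZMod n × ZMod n) :=
    (Wlt χ).filter (fun p => ¬ χ p.2 ≠ χ (p.2 + gam n)) with hYc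
  have hsplit : YD.card + Yc.card = (Wlt χ).card :=
    Finset.card_filter_add_card_filter_not _
  -- Yc has even cardinality
  have hYc0 : ((Yc.card : ℕ) : ZMod 2) = 0 := by
    have hcs : ((Yc.card : ℕ) : ZMod 2) = ∑ _p ∈ Yc, (1 : ZMod 2) := by
      rw [Finset.sum_const, nsmul_eq_mul, mul_one]
    rw [hcs]
    apply Finset.sum_involution (fun p (_ : p ∈ Yc) => (p.1, p.2 + gam n))
    · intro a _; decide
    · intro a _ _
      intro h
      exact hgne a.2 (congrArg Prod.snd h)
    · intro a ha
      simp only [hYc, Wlt, mem_filter, mem_univ, true_and, not_not] at ha ⊢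
      obtain ⟨⟨h1, h2, h3⟩, h4⟩ := ha
      refine ⟨⟨?_, ?_, ?_⟩, ?_⟩
      · rw [← h4]; exact h1
      · rw [hz]; exact h2
      · rw [hz]; exact h3
      · rw [haa]; exact h4.symm
    · intro a _
      exact Prod.ext rfl (haa a.2)
  -- bijection between YD and Y3
  have hbij : YD.card = (Y3 χ).card := by
    apply Finset.card_bij (fun p (_ : p ∈ YD) =>
      if p.2.val < (p.2 + gam n).val then p else (p.1, p.2 + gam n))
    · intro p hp
      simp only [hYD, Wlt, mem_filter, mem_univ, true_and] at hp
      obtain ⟨⟨h1, h2, h3⟩, h4⟩ := hp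
      by_cases h : p.2.val < (p.2 + gam n).val
      · rw [if_pos h]
        simp only [Y3, mem_filter, mem_univ, true_and]
        exact ⟨h2, h3, h4, h⟩
      · rw [if_neg h]
        simp only [Y3, mem_filter, mem_univ, true_and]
        refine ⟨by rw [hz]; exact h2, by rw [hz]; exact h3, ?_, ?_⟩
        · rw [haa]; exact fun hh => h4 hh.symm
        · rw [haa]
          have := hvne p.2
          omega
    · intro p hp q hq heq
      simp only [hYD, Wlt, mem_filter, mem_univ, true_and] at hp hq
      obtain ⟨⟨hp1, _, _⟩, hp4⟩ := hp
      obtain ⟨⟨hq1, _, _⟩, hq4⟩ := hq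
      by_cases h : p.2.val < (p.2 + gam n).val <;>
        by_cases h' : q.2.val < (q.2 + gam n).val
      · rw [if_pos h, if_pos h'] at heq; exact heq
      · rw [if_pos h, if_neg h'] at heq
        exfalso
        obtain ⟨h6', h5'⟩ := Prod.ext_iff.mp heq
        have h5 : p.2 = q.2 + gam n := h5'
        have h6 : p.1 = q.1 := h6'
        rw [h6, h5] at hp1
        exact hq4 (hq1.symm.trans hp1)
      · rw [if_neg h, if_pos h'] at heq
        exfalso
        obtain ⟨h6', h5'⟩ := Prod.ext_iff.mp heq
        have h5 : p.2 + gam n = q.2 := h5'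
        have h6 : p.1 = q.1 := h6'
        rw [h6] at hp1
        rw [← h5] at hq1
        exact hp4 (hp1.symm.trans hq1)
      · rw [if_neg h, if_neg h'] at heq
        obtain ⟨h6', h5'⟩ := Prod.ext_iff.mp heq
        have h5 : p.2 + gam n = q.2 + gam n := h5'
        have h6 : p.1 = q.1 := h6'
        have h7 : p.2 = q.2 := by
          have := congrArg (fun t => t + gam n) h5
          simpa [haa] using this
        exact Prod.ext h6 h7
    · intro q hq
      simp only [Y3, mem_filter, mem_univ, true_and] at hq
      obtain ⟨h1, h2, h3, h4⟩ := hq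
      by_cases hc : χ q.2 = χ q.1
      · refine ⟨q, ?_, ?_⟩
        · simp only [hYD, Wlt, mem_filter, mem_univ, true_and]
          exact ⟨⟨hc.symm, h1, h2⟩, h3⟩
        · rw [if_pos h4]
      · refine ⟨(q.1, q.2 + gam n), ?_, ?_⟩
        · simp only [hYD, Wlt, mem_filter, mem_univ, true_and]
          have hcol : χ (q.2 + gam n) = χ q.1 := fin2_eq _ _ (χ q.2) (fun hh => h3 hh.symm) (fun hh => hc hh.symm)
          refine ⟨⟨hcol.symm, by rw [hz]; exact h1, by rw [hz]; exact h2⟩, ?_⟩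
          rw [haa]
          exact fun hh => h3 (hh.symm)
        · have hcond : ¬ ((q.2 + gam n).val < (q.2 + gam n + gam n).val) := by
            rw [haa]; omega
          rw [if_neg hcond]
          exact Prod.ext rfl (haa q.2)
  rw [← hsplit, ← hbij]
  push_cast
  rw [hYc0]
  ring


def monoSets : Finset (Finset (ZMod n)) :=
  (apSets n).filter (fun s => ∀ x ∈ s, ∀ y ∈ s, χ x = χ y)

def tripleOf (p : ZMod n × ZMod n) : Finset (ZMod n) := {p.1, p.2, 2 * p.2 - p.1}

lemma wlt_distinct {p : ZMod n × ZMod n} (hp : p ∈ Wlt χ) :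
    p.1 ≠ p.2 ∧ p.1 ≠ 2 * p.2 - p.1 ∧ p.2 ≠ 2 * p.2 - p.1 := by
  simp only [Wlt, mem_filter, mem_univ, true_and] at hp
  obtain ⟨_, _, h3⟩ := hp
  have hxz : p.1 ≠ 2 * p.2 - p.1 := fun he => by rw [← he] at h3; omega
  refine ⟨?_, hxz, ?_⟩
  · intro he
    apply hxz
    rw [← he]; ring
  · intro he
    apply hxz
    have : p.1 = p.2 := by linear_combination he
    rw [← this]; ring

lemma wlt_maps (p : ZMod n × ZMod n) (hp : p ∈ Wlt χ) : tripleOf p ∈ monoSets χ := by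
  obtain ⟨hxy, hxz, hyz⟩ := wlt_distinct χ hp
  simp only [Wlt, mem_filter, mem_univ, true_and] at hp
  obtain ⟨h1, h2, _⟩ := hp
  have hcard : (tripleOf p).card = 3 :=
    Finset.card_eq_three.mpr ⟨p.1, p.2, 2 * p.2 - p.1, hxy, hxz, hyz, rfl⟩
  have hcx : ∀ u ∈ tripleOf p, χ u = χ p.1 := by
    intro u hu
    simp only [tripleOf, mem_insert, mem_singleton] at hu
    rcases hu with h | h | h
    · rw [h]
    · rw [h]; exact h1.symm
    · rw [h]; exact h2.symm
  simp only [monoSets, apSets, mem_filter, mem_univ, true_and]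
  refine ⟨⟨⟨p.1, p.2 - p.1, ?_, ?_⟩, hcard⟩, ?_⟩
  · exact sub_ne_zero.mpr (Ne.symm hxy)
  · have e1 : p.1 + (p.2 - p.1) = p.2 := by ring
    have e2 : p.1 + 2 * (p.2 - p.1) = 2 * p.2 - p.1 := by ring
    rw [e1, e2]; rfl
  · intro u hu v hv
    exact (hcx u hu).trans (hcx v hv).symm

lemma fiber_odd (s : Finset (ZMod n)) (hs : s ∈ monoSets χ) :
    Odd ((Wlt χ).filter (fun p => tripleOf p = s)).card := by
  classical
  simp only [monoSets, apSets, mem_filter, mem_univ, true_and] at hs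
  obtain ⟨⟨⟨a, b, hb, hsab⟩, hcard⟩, hmono⟩ := hs
  set mids : Finset (ZMod n) := s.filter (fun w => w + w + w = ∑ u ∈ s, u) with hmids
  -- fiber card equals mids card
  have hfib : ((Wlt χ).filter (fun p => tripleOf p = s)).card = mids.card := by
    apply Finset.card_bij (fun p (_ : p ∈ (Wlt χ).filter (fun p => tripleOf p = s)) => p.2)
    · intro p hp
      rw [mem_filter] at hp
      obtain ⟨hpw, hps⟩ := hp
      obtain ⟨hxy, hxz, hyz⟩ := wlt_distinct χ hpw
      have hsum : ∑ u ∈ s, u = p.1 + (p.2 + (2 * p.2 - p.1)) := by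
        rw [← hps]
        simp only [tripleOf]
        rw [Finset.sum_insert (by simp [hxy, hxz]), Finset.sum_insert (by simp [hyz]),
          Finset.sum_singleton]
      simp only [hmids, mem_filter]
      constructor
      · rw [← hps]; simp [tripleOf]
      · rw [hsum]; ring
    · intro p hp q hq heq
      rw [mem_filter] at hp hq
      obtain ⟨hpw, hps⟩ := hp
      obtain ⟨hqw, hqs⟩ := hq
      obtain ⟨hxy, hxz, hyz⟩ := wlt_distinct χ hpw
      obtain ⟨hxy', hxz', hyz'⟩ := wlt_distinct χ hqw
      simp only [Wlt, mem_filter, mem_univ, true_and] at hpw hqw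
      have hx : p.1 ∈ ({q.1, q.2, 2 * q.2 - q.1} : Finset (ZMod n)) := by
        have : p.1 ∈ tripleOf p := by simp [tripleOf]
        rw [hps, ← hqs] at this; exact this
      simp only [mem_insert, mem_singleton, ← heq] at hx
      rcases hx with h | h | h
      · exact Prod.ext h heq
      · exact absurd h hxy
      · exfalso
        have hx' : q.1 ∈ ({p.1, p.2, 2 * p.2 - p.1} : Finset (ZMod n)) := by
          have : q.1 ∈ tripleOf q := by simp [tripleOf]
          rw [hqs, ← hps] at this; exact this
        simp only [mem_insert, mem_singleton, heq] at hx'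
        rcases hx' with h' | h' | h'
        · rw [h'] at h
          exact hxz h
        · exact hxy' h'
        · -- p.1 = 2 p.2 - q.1 and q.1 = 2 q.2 - p.1
          have e1 : p.1.val < (2 * p.2 - p.1).val := hpw.2.2
          have e2 : q.1.val < (2 * q.2 - q.1).val := hqw.2.2
          have hq1 : 2 * p.2 - p.1 = q.1 := by linear_combination -h
          have hp1 : 2 * q.2 - q.1 = p.1 := by linear_combination -h'
          rw [hq1] at e1
          rw [hp1] at e2
          omega
    · intro w hw
      simp only [hmids, mem_filter] at hw
      obtain ⟨hws, hwsum⟩ := hw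
      have herase2 : (s.erase w).card = 2 := by
        rw [Finset.card_erase_of_mem hws, hcard]
      obtain ⟨u, v, huv, herase⟩ := Finset.card_eq_two.mp herase2
      have hu_er : u ∈ s.erase w := by rw [herase]; exact Finset.mem_insert_self u {v}
      have hv_er : v ∈ s.erase w := by rw [herase]; simp
      have hus : u ∈ s := Finset.mem_of_mem_erase hu_er
      have hvs : v ∈ s := Finset.mem_of_mem_erase hv_er
      have huw : u ≠ w := Finset.ne_of_mem_erase hu_er
      have hvw : v ≠ w := Finset.ne_of_mem_erase hv_er
      have hsins : s = insert w ({u, v} : Finset (ZMod n)) := by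
        rw [← herase, Finset.insert_erase hws]
      have hsum2 : ∑ x ∈ s, x = w + (u + v) := by
        rw [hsins, Finset.sum_insert (by simp [Ne.symm huw, Ne.symm hvw]),
          Finset.sum_pair huv]
      have haddw : u + v = w + w := by
        rw [hsum2] at hwsum; linear_combination -hwsum
      have key : ∀ u' v' : ZMod n, u' ≠ v' → u' ∈ s → v' ∈ s → u' ≠ w → v' ≠ w →
          u' + v' = w + w → u'.val < v'.val → s = {w, u', v'} →
          ∃ p, ∃ (hp : p ∈ (Wlt χ).filter (fun p => tripleOf p = s)), p.2 = w := by
        intro u' v' huv' hu's hv's hu'w hv'w hsum' hlt hsins'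
        have hzv : 2 * w - u' = v' := by linear_combination -hsum'
        refine ⟨(u', w), ?_, rfl⟩
        rw [mem_filter]
        constructor
        · simp only [Wlt, mem_filter, mem_univ, true_and]
          refine ⟨hmono u' hu's w hws, ?_, ?_⟩
          · rw [hzv]; exact hmono u' hu's v' hv's
          · rw [hzv]; exact hlt
        · simp only [tripleOf]
          rw [hzv, hsins']
          ext t
          simp only [mem_insert, mem_singleton]
          tauto
      have hvalne : u.val ≠ v.val := fun hv2 => huv (ZMod.val_injective n hv2)
      rcases Nat.lt_or_ge u.val v.val with hlt | hge
      · obtain ⟨p, hp, hpw⟩ := key u v huv hus hvs huw hvw haddw hlt hsins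
        exact ⟨p, hp, hpw⟩
      · have hlt : v.val < u.val := by omega
        have hsins2 : s = {w, v, u} := by
          rw [hsins]; ext t; simp only [mem_insert, mem_singleton]; tauto
        obtain ⟨p, hp, hpw⟩ := key v u (Ne.symm huv) hvs hus hvw huw
          (by linear_combination haddw) hlt hsins2
        exact ⟨p, hp, hpw⟩
  rw [hfib]
  -- mids has odd cardinality
  have hdist := card3_distinct (hsab ▸ hcard)
  obtain ⟨d1, d2, d3⟩ := hdist
  have hsumab : ∑ u ∈ s, u = a + (a + b) + (a + 2 * b) := by
    rw [hsab, Finset.sum_insert (by simp [d1, d2]), Finset.sum_insert (by simp [d3]),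
      Finset.sum_singleton]
    ring
  have hmem1 : a + b ∈ mids := by
    simp only [hmids, mem_filter]
    constructor
    · rw [hsab]; simp
    · rw [hsumab]; ring
  have hsubs : mids ⊆ s := Finset.filter_subset _ _
  have hle3 : mids.card ≤ 3 := hcard ▸ Finset.card_le_card hsubs
  have hge1 : 1 ≤ mids.card := Finset.card_pos.mpr ⟨a + b, hmem1⟩
  have hnot2 : mids.card ≠ 2 := by
    intro h2
    have hlt : 1 < mids.card := by omega
    obtain ⟨w, hw, w', hw', hww⟩ := Finset.one_lt_card.mp hlt
    have hsubs2 : s ⊆ mids := by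
      intro u hu
      by_cases h1 : u = w
      · rw [h1]; exact hw
      by_cases h2' : u = w'
      · rw [h2']; exact hw'
      have h3set : ({w, w', u} : Finset (ZMod n)) = s := by
        apply Finset.eq_of_subset_of_card_le
        · intro t ht
          simp only [mem_insert, mem_singleton] at ht
          rcases ht with h | h | h
          · rw [h]; exact hsubs hw
          · rw [h]; exact hsubs hw'
          · rw [h]; exact hu
        · rw [hcard]
          have : ({w, w', u} : Finset (ZMod n)).card = 3 :=
            Finset.card_eq_three.mpr ⟨w, w', u, hww, Ne.symm h1, Ne.symm h2', rfl⟩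
          omega
      have hsum3 : ∑ x ∈ s, x = w + w' + u := by
        rw [← h3set, Finset.sum_insert (by simp [hww, Ne.symm h1]),
          Finset.sum_insert (by simp [Ne.symm h2']), Finset.sum_singleton]
        ring
      simp only [hmids, mem_filter] at hw hw' ⊢
      refine ⟨hu, ?_⟩
      rw [hsum3]
      rw [hsum3] at hw hw'
      linear_combination -hw.2 - hw'.2
    have : mids = s := Finset.Subset.antisymm hsubs hsubs2
    rw [this, hcard] at h2
    omega
  have : mids.card = 1 ∨ mids.card = 3 := by omega
  rcases this with h | h
  · rw [h]; exact ⟨0, rfl⟩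
  · rw [h]; exact ⟨1, rfl⟩

lemma mono_eq_wlt_mod2 :
    (((monoSets χ).card : ℕ) : ZMod 2) = (((Wlt χ).card : ℕ) : ZMod 2) := by
  classical
  have h1 : (Wlt χ).card = ∑ s ∈ monoSets χ, ((Wlt χ).filter (fun p => tripleOf p = s)).card :=
    Finset.card_eq_sum_card_fiberwise (wlt_maps χ)
  have hterm : ∀ s ∈ monoSets χ,
      (((((Wlt χ).filter (fun p => tripleOf p = s)).card : ℕ)) : ZMod 2) = 1 := by
    intro s hs
    obtain ⟨m, hm⟩ := fiber_odd χ s hs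
    rw [hm]
    push_cast
    have h2 : (2 : ZMod 2) = 0 := by decide
    rw [h2]
    ring
  rw [h1, Nat.cast_sum, Finset.sum_congr rfl hterm, Finset.sum_const, nsmul_eq_mul, mul_one]

end main2
end Stmt5Aux

open Stmt5Aux in
theorem stmt_5 (n : ℕ) [NeZero n] (hn : n % 4 = 2) (χ : ZMod n → Fin 2) :
    Even (monoAPCount n χ) := by
  classical
  have hgg : gam n + gam n = 0 := gam_add_gam hn
  have hgne : ∀ y : ZMod n, y + gam n ≠ y := fun y => add_gam_ne hn y
  have tors' : ∀ x y : ZMod n, x + x = y + y → x = y ∨ x = y + gam n :=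
    fun x y hx => torsion' hn x y hx
  have h1 : ((monoAPCount n χ : ℕ) : ZMod 2) = 0 := by
    have e0 : monoAPCount n χ = (monoSets χ).card := rfl
    rw [e0, mono_eq_wlt_mod2 χ, wlt_card_y3 χ hgg hgne,
      Y3_card_zero χ (fun y hy => fiber_card_eq χ hn tors' hgg hgne y hy) hgg hgne]
  have h2 : (2 : ℕ) ∣ monoAPCount n χ := by
    exact_mod_cast (ZMod.natCast_eq_zero_iff (monoAPCount n χ) 2).mp h1
  rw [Nat.even_iff]
  omega
end

section
/- Let n be an odd positive integer with gcd(n,6)=1. Color the elements 0,1,...,(n-1)/2 of Z_n red and the elements (n+1)/2,...,n-1 blue. Then the number of monochromatic 3-term arithmetic progressions in Z_n under this coloring equals (n-1)(n-3)/8. -/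
open Finset

private lemma ifeq2 {p q : Prop} [Decidable p] [Decidable q] :
    ((if p then (0:Fin 2) else 1) = (if q then (0:Fin 2) else 1)) ↔ (p ↔ q) := by
  by_cases hp : p <;> by_cases hq : q <;> simp [hp, hq]

private lemma card_even_range (N : ℕ) :
    ((Finset.range N).filter (fun i => i % 2 = 0)).card = (N+1)/2 := by
  induction N with
  | zero => simp
  | succ k ih =>
    rw [Finset.range_add_one, Finset.filter_insert]
    by_cases h : k % 2 = 0
    · rw [if_pos h, Finset.card_insert_of_notMem (by simp)]
      omega
    · rw [if_neg h]; omega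

private lemma card_val_filter (n : ℕ) [NeZero n] (q : ℕ → Prop) [DecidablePred q] :
    ((Finset.univ.filter (fun x : ZMod n => q x.val)).card) =
      ((Finset.range n).filter q).card := by
  apply Finset.card_nbij' (s := Finset.univ.filter (fun x : ZMod n => q x.val))
    (t := (Finset.range n).filter q) (i := fun x => x.val) (j := fun i => (i : ZMod n))
  · intro x hx
    simp only [Finset.mem_coe, Finset.mem_filter] at *
    exact ⟨Finset.mem_range.mpr (ZMod.val_lt x), hx.2⟩
  · intro i hi
    simp only [Finset.mem_coe, Finset.mem_filter] at *
    refine ⟨Finset.mem_univ _, ?_⟩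
    rw [ZMod.val_cast_of_lt (Finset.mem_range.mp hi.1)]
    exact hi.2
  · intro x _
    simp [ZMod.natCast_val, ZMod.cast_id]
  · intro i hi
    rw [Finset.mem_coe, Finset.mem_filter, Finset.mem_range] at hi
    exact ZMod.val_cast_of_lt hi.1


private lemma arith_count (n m a b c d : ℕ) (hnm : n = 2*m+1)
    (k1 : a = (m+2)/2) (k2 : a + b = m+1) (k3 : a + c = (n+1)/2)
    (k4 : c + d = n - (m+1)) :
    (a*a - a) + ((b*b - b) + ((c*c - c) + (d*d - d))) = m*(m-1) := by
  rcases Nat.even_or_odd m with ⟨k, hk⟩ | ⟨k, hk⟩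
  · have f1 : a = k+1 := by omega
    have f2 : b = k := by omega
    have f3 : c = k := by omega
    have f4 : d = k := by omega
    rw [f1, f2, f3, f4, hk]
    rcases Nat.eq_zero_or_pos k with h0 | hpos
    · subst h0; norm_num
    · zify [show k ≤ k*k from by nlinarith,
        show (k+1) ≤ (k+1)*(k+1) from by nlinarith,
        show 1 ≤ k+k from by omega]
      ring
  · have f1 : a = k+1 := by omega
    have f2 : b = k+1 := by omega
    have f3 : c = k+1 := by omega
    have f4 : d = k := by omega
    rw [f1, f2, f3, f4, hk]
    rcases Nat.eq_zero_or_pos k with h0 | hpos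
    · subst h0; norm_num
    · zify [show k ≤ k*k from by nlinarith,
        show (k+1) ≤ (k+1)*(k+1) from by nlinarith,
        show 1 ≤ 2*k+1 from by omega]
      ring

private lemma final_glue (n m Mc : ℕ) (hnm : n = 2*m+1)
    (htot : 2*Mc = m*(m-1)) : Mc = (n-1)*(n-3)/8 := by
  have hprod : (n-1)*(n-3) = 4*(m*(m-1)) := by
    rcases Nat.eq_zero_or_pos m with h0 | hpos
    · rw [h0]
      have h1 : n = 1 := by omega
      rw [h1]
    · have ha : n - 1 = 2*m := by omega
      have hb' : n - 3 = 2*(m-1) := by omega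
      rw [ha, hb']; ring
  rw [hprod]
  omega

set_option maxHeartbeats 1600000 in
theorem stmt_10 (n : ℕ) [NeZero n] (hn : Nat.gcd n 6 = 1) :
    monoAPCount n (fun i => if i.val ≤ (n - 1) / 2 then 0 else 1) =
      (n - 1) * (n - 3) / 8 := by
  have hn1 : 1 ≤ n := Nat.one_le_iff_ne_zero.mpr (NeZero.ne n)
  have h2n : ¬ (2 ∣ n) := by
    intro h
    have h1 : (2:ℕ) ∣ Nat.gcd n 6 := Nat.dvd_gcd h (by norm_num)
    omega
  have h3n : ¬ (3 ∣ n) := by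
    intro h
    have h1 : (3:ℕ) ∣ Nat.gcd n 6 := Nat.dvd_gcd h (by norm_num)
    omega
  set m := (n-1)/2 with hm
  have hnm : n = 2*m+1 := by omega
  have hc2 : Nat.Coprime 2 n := (Nat.Prime.coprime_iff_not_dvd Nat.prime_two).mpr h2n
  have hc3 : Nat.Coprime 3 n := (Nat.Prime.coprime_iff_not_dvd Nat.prime_three).mpr h3n
  have h2 : IsUnit (2 : ZMod n) := by simpa using (ZMod.isUnit_iff_coprime 2 n).mpr hc2
  have h3 : IsUnit (3 : ZMod n) := by simpa using (ZMod.isUnit_iff_coprime 3 n).mpr hc3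
  obtain ⟨w2, hw2⟩ : ∃ w : ZMod n, 2 * w = 1 := by
    obtain ⟨u, hu⟩ := h2; exact ⟨↑u⁻¹, by rw [← hu]; exact u.mul_inv⟩
  set χ : ZMod n → Fin 2 := fun i => if i.val ≤ m then 0 else 1 with hχ
  -- midpoint characterization
  have hmid : ∀ x z : ZMod n, ((χ x = χ (w2*(x+z)) ∧ χ x = χ z) ↔
      ((x.val ≤ m ↔ z.val ≤ m) ∧ x.val % 2 = z.val % 2)) := by
    intro x z
    have hu := ZMod.val_lt x
    have hv := ZMod.val_lt z
    have key : ∀ t : ℕ, t < n → 2*t % n = (x.val + z.val) % n → (w2*(x+z)).val = t := by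
      intro t ht hmod
      have hcast : ((2*t : ℕ) : ZMod n) = ((x.val + z.val : ℕ) : ZMod n) :=
        (ZMod.natCast_eq_natCast_iff' _ _ _).mpr hmod
      push_cast at hcast
      simp only [ZMod.natCast_val, ZMod.cast_id] at hcast
      have h2' : (2:ZMod n) * (w2 * (x+z)) = x + z := by rw [← mul_assoc, hw2, one_mul]
      have heq := h2.mul_left_cancel (hcast.trans h2'.symm)
      rw [← heq, ZMod.val_cast_of_lt ht]
    by_cases hpar : (x.val + z.val) % 2 = 0
    · have hval : (w2*(x+z)).val = (x.val + z.val)/2 :=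
        key _ (by omega) (by rw [show 2*((x.val+z.val)/2) = x.val + z.val from by omega])
      simp only [hχ, hval, ifeq2]
      omega
    · by_cases hlt : x.val + z.val < n
      · have hval : (w2*(x+z)).val = (x.val + z.val + n)/2 :=
          key _ (by omega) (by rw [show 2*((x.val+z.val+n)/2) = x.val+z.val+n from by omega,
            Nat.add_mod_right])
        simp only [hχ, hval, ifeq2]
        omega
      · have hmod : (x.val+z.val) % n = (x.val+z.val-n) % n := by
          conv_lhs => rw [show x.val+z.val = (x.val+z.val-n)+n from by omega]
          rw [Nat.add_mod_right]
        have hval : (w2*(x+z)).val = (x.val + z.val - n)/2 :=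
          key _ (by omega) (by
            rw [show 2*((x.val+z.val-n)/2) = x.val+z.val-n from by omega, ← hmod])
        simp only [hχ, hval, ifeq2]
        omega
  -- basic algebraic helpers
  have hcan3 : ∀ x y : ZMod n, 3*x = 3*y → x = y := fun x y h => h3.mul_left_cancel h
  have hne3 : ∀ a b : ZMod n, b ≠ 0 → (a ≠ a+b ∧ a ≠ a+2*b ∧ a+b ≠ a+2*b) := by
    intro a b hb
    have h2b : 2*b ≠ 0 := fun h => hb ((h2.mul_right_eq_zero).mp h)
    refine ⟨fun h => hb (add_eq_left.mp h.symm),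
      fun h => h2b (add_eq_left.mp h.symm), fun h => hb ?_⟩
    have h1 := add_left_cancel h
    rw [two_mul] at h1
    exact right_eq_add.mp h1
  have hdist : ∀ a b : ZMod n, b ≠ 0 → ({a, a+b, a+2*b} : Finset (ZMod n)).card = 3 := by
    intro a b hb
    obtain ⟨e1, e2, e3⟩ := hne3 a b hb
    rw [show ({a, a+b, a+2*b} : Finset (ZMod n)) = insert a (insert (a+b) {a+2*b}) from rfl,
      Finset.card_insert_of_notMem (by simp [e1, e2]),
      Finset.card_insert_of_notMem (by simp [e3]), Finset.card_singleton]
  have hsum : ∀ a b : ZMod n, b ≠ 0 →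
      ∑ x ∈ ({a, a+b, a+2*b} : Finset (ZMod n)), x = 3*(a+b) := by
    intro a b hb
    obtain ⟨e1, e2, e3⟩ := hne3 a b hb
    rw [show ({a, a+b, a+2*b} : Finset (ZMod n)) = insert a (insert (a+b) {a+2*b}) from rfl,
      Finset.sum_insert (by simp [e1, e2]), Finset.sum_insert (by simp [e3]),
      Finset.sum_singleton]
    ring
  -- the monochromatic AP sets and the pair-counting set
  set M := (apSets n).filter (fun s => ∀ x ∈ s, ∀ y ∈ s, χ x = χ y) with hM
  set P := (Finset.univ : Finset (ZMod n × ZMod n)).filter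
      (fun p => p.2 ≠ 0 ∧ χ p.1 = χ (p.1+p.2) ∧ χ p.1 = χ (p.1+2*p.2)) with hP
  have hmemM : ∀ a b : ZMod n, b ≠ 0 → (χ a = χ (a+b)) → (χ a = χ (a+2*b)) →
      ({a,a+b,a+2*b} : Finset (ZMod n)) ∈ M := by
    intro a b hb hc1 hc2
    rw [hM, Finset.mem_filter]
    refine ⟨?_, ?_⟩
    · rw [apSets, Finset.mem_filter]
      exact ⟨Finset.mem_univ _, ⟨a, b, hb, rfl⟩, hdist a b hb⟩
    have key : ∀ x ∈ ({a,a+b,a+2*b}:Finset (ZMod n)), χ x = χ a := by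
      intro x hx
      simp only [Finset.mem_insert, Finset.mem_singleton] at hx
      rcases hx with h|h|h <;> rw [h]
      · exact hc1.symm
      · exact hc2.symm
    intro x hx y hy; rw [key x hx, key y hy]
  have hPM : ∀ p ∈ P, ({p.1, p.1+p.2, p.1+2*p.2} : Finset (ZMod n)) ∈ M := by
    intro p hp
    rw [hP, Finset.mem_filter] at hp
    exact hmemM _ _ hp.2.1 hp.2.2.1 hp.2.2.2
  have hA1 : P.card = ∑ s ∈ M, (P.filter
      (fun p => ({p.1, p.1+p.2, p.1+2*p.2} : Finset (ZMod n)) = s)).card :=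
    Finset.card_eq_sum_card_fiberwise hPM
  have hfiber : ∀ s ∈ M, (P.filter
      (fun p => ({p.1, p.1+p.2, p.1+2*p.2} : Finset (ZMod n)) = s)).card = 2 := by
    intro s hs
    rw [hM, Finset.mem_filter] at hs
    obtain ⟨hsAP, hmono⟩ := hs
    rw [apSets, Finset.mem_filter] at hsAP
    obtain ⟨-, ⟨a, b, hb, hse⟩, -⟩ := hsAP
    have h2b : 2*b ≠ 0 := fun h => hb ((h2.mul_right_eq_zero).mp h)
    have habne : ((a, b) : ZMod n × ZMod n) ≠ (a + 2*b, -b) := by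
      intro h
      have hb2 : b = -b := congrArg Prod.snd h
      apply h2b
      rw [two_mul]
      nth_rewrite 1 [hb2]
      exact neg_add_cancel b
    have hset : P.filter (fun p => ({p.1, p.1+p.2, p.1+2*p.2} : Finset (ZMod n)) = s)
        = {(a,b), (a+2*b, -b)} := by
      ext p
      obtain ⟨x, c⟩ := p
      simp only [Finset.mem_filter, Finset.mem_insert, Finset.mem_singleton, hP,
        Finset.mem_univ, true_and]
      constructor
      · rintro ⟨⟨hcne, hc1, hc2⟩, hps⟩
        have hsum1 := hsum x c hcne
        rw [hps, hse] at hsum1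
        have hsum2 := hsum a b hb
        have hmidd : x + c = a + b := hcan3 _ _ (by rw [← hsum1, hsum2])
        have hx1 : x ∈ ({a, a+b, a+2*b} : Finset (ZMod n)) := by
          rw [← hse, ← hps]; exact Finset.mem_insert_self _ _
        simp only [Finset.mem_insert, Finset.mem_singleton] at hx1
        rcases hx1 with h|h|h
        · left
          subst h
          have : c = b := add_left_cancel hmidd
          rw [this]
        · exfalso
          apply hcne
          subst h
          exact add_eq_left.mp hmidd
        · right
          subst h
          have : c = -b := by linear_combination hmidd
          rw [this]
      · rintro (h|h) <;> rw [Prod.mk.injEq] at h <;> obtain ⟨h1, h2'⟩ := h <;> rw [h1, h2']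
        · have m1 : a ∈ s := by rw [hse]; simp
          have m2 : a + b ∈ s := by rw [hse]; simp
          have m3 : a + 2*b ∈ s := by rw [hse]; simp
          exact ⟨⟨hb, hmono _ m1 _ m2, hmono _ m1 _ m3⟩, hse.symm⟩
        · have m1 : a ∈ s := by rw [hse]; simp
          have m2 : a + b ∈ s := by rw [hse]; simp
          have m3 : a + 2*b ∈ s := by rw [hse]; simp
          have r1 : a+2*b + -b = a+b := by ring
          have r2 : a+2*b + 2*(-b) = a := by ring
          refine ⟨⟨neg_ne_zero.mpr hb, ?_, ?_⟩, ?_⟩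
          · rw [r1]; exact hmono _ m3 _ m2
          · rw [r2]; exact hmono _ m3 _ m1
          · rw [r1, r2, hse]
            ext y
            simp only [Finset.mem_insert, Finset.mem_singleton]
            tauto
    rw [hset, Finset.card_insert_of_notMem (by simp [habne]), Finset.card_singleton]
  have hA1' : P.card = 2 * M.card := by
    rw [hA1, Finset.sum_congr rfl hfiber, Finset.sum_const, smul_eq_mul, mul_comm]
  -- bijection with the (x,z) pair set
  set S := (Finset.univ : Finset (ZMod n × ZMod n)).filter
      (fun q => q.1 ≠ q.2 ∧ (χ q.1 = χ (w2*(q.1+q.2)) ∧ χ q.1 = χ q.2)) with hS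
  have hA2 : P.card = S.card := by
    apply Finset.card_nbij' (i := fun p => (p.1, p.1 + 2*p.2))
      (j := fun q => (q.1, w2*(q.2-q.1)))
    · intro p hp
      rw [hP, Finset.mem_coe, Finset.mem_filter] at hp
      obtain ⟨-, hb, hc1, hc2⟩ := hp
      rw [hS, Finset.mem_coe, Finset.mem_filter]
      dsimp only
      refine ⟨Finset.mem_univ _, (hne3 p.1 p.2 hb).2.1, ?_, hc2⟩
      rw [show w2*(p.1+(p.1+2*p.2)) = p.1+p.2 from by linear_combination (p.1+p.2)*hw2]
      exact hc1
    · intro q hq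
      rw [hS, Finset.mem_coe, Finset.mem_filter] at hq
      obtain ⟨-, hne, hc1, hc2⟩ := hq
      rw [hP, Finset.mem_coe, Finset.mem_filter]
      dsimp only
      refine ⟨Finset.mem_univ _, ?_, ?_, ?_⟩
      · intro h0
        apply hne
        have hz : q.2 - q.1 = 2*(w2*(q.2-q.1)) := by linear_combination (-(q.2-q.1))*hw2
        rw [h0, mul_zero] at hz
        have := sub_eq_zero.mp hz
        exact this.symm
      · rw [show q.1 + w2*(q.2-q.1) = w2*(q.1+q.2) from by linear_combination (-q.1)*hw2]
        exact hc1
      · rw [show q.1 + 2*(w2*(q.2-q.1)) = q.2 from by linear_combination (q.2-q.1)*hw2]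
        exact hc2
    · intro p _
      obtain ⟨a, b⟩ := p
      simp only [Prod.mk.injEq, true_and]
      linear_combination b*hw2
    · intro q _
      obtain ⟨x, z⟩ := q
      simp only [Prod.mk.injEq, true_and]
      linear_combination (z-x)*hw2
  -- rewrite S via the class function
  set c' : ℕ → Bool × Bool := fun i => (decide (i ≤ m), decide (i % 2 = 0)) with hc'
  have hS2 : S = (Finset.univ : Finset (ZMod n × ZMod n)).filter
      (fun q => q.1 ≠ q.2 ∧ c' q.1.val = c' q.2.val) := by
    ext q
    rw [hS]
    simp only [Finset.mem_filter, Finset.mem_univ, true_and]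
    constructor
    · rintro ⟨h1, h2'⟩
      refine ⟨h1, ?_⟩
      have hh := (hmid q.1 q.2).mp h2'
      simp only [hc', Prod.mk.injEq, decide_eq_decide]
      exact ⟨hh.1, by omega⟩
    · rintro ⟨h1, hcc⟩
      simp only [hc', Prod.mk.injEq, decide_eq_decide] at hcc
      exact ⟨h1, (hmid q.1 q.2).mpr ⟨hcc.1, by omega⟩⟩
  -- fiber decomposition over the four classes
  have hSfib : S.card = ∑ k ∈ (Finset.univ : Finset (Bool × Bool)),
      ((Finset.univ.filter (fun x : ZMod n => c' x.val = k)).offDiag).card := by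
    rw [hS2]
    rw [Finset.card_eq_sum_card_fiberwise
      (f := fun q : ZMod n × ZMod n => c' q.1.val)
      (t := (Finset.univ : Finset (Bool × Bool))) (fun x _ => Finset.mem_univ _)]
    apply Finset.sum_congr rfl
    intro k _
    congr 1
    ext q
    simp only [Finset.mem_filter, Finset.mem_univ, true_and, Finset.mem_offDiag]
    constructor
    · rintro ⟨⟨hne, hcc⟩, hk⟩
      exact ⟨hk, by rw [← hcc]; exact hk, hne⟩
    · rintro ⟨h1', h2', h3'⟩
      exact ⟨⟨h3', h1'.trans h2'.symm⟩, h1'⟩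
  have hoff : ∀ k : Bool × Bool,
      ((Finset.univ.filter (fun x : ZMod n => c' x.val = k)).offDiag).card =
      ((Finset.range n).filter (fun i => c' i = k)).card *
        ((Finset.range n).filter (fun i => c' i = k)).card -
        ((Finset.range n).filter (fun i => c' i = k)).card := by
    intro k
    rw [Finset.offDiag_card]
    rw [card_val_filter n (fun i => c' i = k)]
  -- the four class conditions in plain form
  have e1 : (Finset.range n).filter (fun i => c' i = (true,true)) =
      (Finset.range n).filter (fun i => i ≤ m ∧ i % 2 = 0) := by
    ext i; simp [hc', Prod.mk.injEq, decide_eq_true_eq]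
  have e2 : (Finset.range n).filter (fun i => c' i = (true,false)) =
      (Finset.range n).filter (fun i => i ≤ m ∧ ¬ i % 2 = 0) := by
    ext i; simp [hc', Prod.mk.injEq, decide_eq_true_eq, decide_eq_false_iff_not]
  have e3 : (Finset.range n).filter (fun i => c' i = (false,true)) =
      (Finset.range n).filter (fun i => ¬ i ≤ m ∧ i % 2 = 0) := by
    ext i; simp [hc', Prod.mk.injEq, decide_eq_true_eq, decide_eq_false_iff_not]
  have e4 : (Finset.range n).filter (fun i => c' i = (false,false)) =
      (Finset.range n).filter (fun i => ¬ i ≤ m ∧ ¬ i % 2 = 0) := by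
    ext i; simp [hc', Prod.mk.injEq, decide_eq_false_iff_not]
  -- counting the four classes
  have hrangele : (Finset.range n).filter (fun i => i ≤ m) = Finset.range (m+1) := by
    ext i; simp only [Finset.mem_filter, Finset.mem_range]; omega
  have k1 : ((Finset.range n).filter (fun i => i ≤ m ∧ i % 2 = 0)).card = (m+2)/2 := by
    rw [show (Finset.range n).filter (fun i => i ≤ m ∧ i % 2 = 0)
        = (Finset.range (m+1)).filter (fun i => i % 2 = 0) from by
      ext i; simp only [Finset.mem_filter, Finset.mem_range]; omega]
    rw [card_even_range]
  have k2 : ((Finset.range n).filter (fun i => i ≤ m ∧ i % 2 = 0)).card +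
      ((Finset.range n).filter (fun i => i ≤ m ∧ ¬ i % 2 = 0)).card = m+1 := by
    have h := Finset.card_filter_add_card_filter_not
      (s := (Finset.range n).filter (fun i => i ≤ m)) (p := fun i => i % 2 = 0)
    rw [Finset.filter_filter, Finset.filter_filter, hrangele, Finset.card_range] at h
    exact h
  have k3 : ((Finset.range n).filter (fun i => i ≤ m ∧ i % 2 = 0)).card +
      ((Finset.range n).filter (fun i => ¬ i ≤ m ∧ i % 2 = 0)).card = (n+1)/2 := by
    have h := Finset.card_filter_add_card_filter_not
      (s := (Finset.range n).filter (fun i => i % 2 = 0)) (p := fun i => i ≤ m)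
    rw [Finset.filter_filter, Finset.filter_filter, card_even_range] at h
    rw [show (Finset.range n).filter (fun a => a % 2 = 0 ∧ a ≤ m)
        = (Finset.range n).filter (fun i => i ≤ m ∧ i % 2 = 0) from by
      ext i; simp only [Finset.mem_filter]; tauto,
      show (Finset.range n).filter (fun a => a % 2 = 0 ∧ ¬ a ≤ m)
        = (Finset.range n).filter (fun i => ¬ i ≤ m ∧ i % 2 = 0) from by
      ext i; simp only [Finset.mem_filter]; tauto] at h
    exact h
  have k4 : ((Finset.range n).filter (fun i => ¬ i ≤ m ∧ i % 2 = 0)).card +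
      ((Finset.range n).filter (fun i => ¬ i ≤ m ∧ ¬ i % 2 = 0)).card = n - (m+1) := by
    have h := Finset.card_filter_add_card_filter_not
      (s := (Finset.range n).filter (fun i => ¬ i ≤ m)) (p := fun i => i % 2 = 0)
    rw [Finset.filter_filter, Finset.filter_filter] at h
    have h2'' := Finset.card_filter_add_card_filter_not
      (s := Finset.range n) (p := fun i => i ≤ m)
    rw [hrangele, Finset.card_range, Finset.card_range] at h2''
    omega
  -- expand the sum over the four classes
  have hsum4 : S.card =
      (((Finset.range n).filter (fun i => i ≤ m ∧ i % 2 = 0)).card *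
        ((Finset.range n).filter (fun i => i ≤ m ∧ i % 2 = 0)).card -
        ((Finset.range n).filter (fun i => i ≤ m ∧ i % 2 = 0)).card) +
      ((((Finset.range n).filter (fun i => i ≤ m ∧ ¬ i % 2 = 0)).card *
        ((Finset.range n).filter (fun i => i ≤ m ∧ ¬ i % 2 = 0)).card -
        ((Finset.range n).filter (fun i => i ≤ m ∧ ¬ i % 2 = 0)).card) +
      ((((Finset.range n).filter (fun i => ¬ i ≤ m ∧ i % 2 = 0)).card *
        ((Finset.range n).filter (fun i => ¬ i ≤ m ∧ i % 2 = 0)).card -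
        ((Finset.range n).filter (fun i => ¬ i ≤ m ∧ i % 2 = 0)).card) +
      (((Finset.range n).filter (fun i => ¬ i ≤ m ∧ ¬ i % 2 = 0)).card *
        ((Finset.range n).filter (fun i => ¬ i ≤ m ∧ ¬ i % 2 = 0)).card -
        ((Finset.range n).filter (fun i => ¬ i ≤ m ∧ ¬ i % 2 = 0)).card))) := by
    rw [hSfib]
    rw [show (Finset.univ : Finset (Bool × Bool)) =
      {(true,true),(true,false),(false,true),(false,false)} from by decide]
    rw [Finset.sum_insert (by decide), Finset.sum_insert (by decide),
      Finset.sum_insert (by decide), Finset.sum_singleton]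
    rw [hoff, hoff, hoff, hoff, e1, e2, e3, e4]
  -- final arithmetic
  have hScard : S.card = m*(m-1) := by
    rw [hsum4]
    exact arith_count n m _ _ _ _ hnm k1 k2 k3 k4
  -- put everything together
  have htot : 2 * M.card = m*(m-1) := by rw [← hA1', hA2, hScard]
  rw [show monoAPCount n χ = M.card from rfl]
  exact final_glue n m M.card hnm htot
end

section
/- Let n be an odd positive integer not divisible by 3, and let R(3, Z_n, 2) denote the minimum over all 2-colorings of Z_n of the number of monochromatic 3-term arithmetic progressions. Then R(3, Z_n, 2) = (n-1)(n-3)/8. -/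
namespace Ap11

set_option linter.unusedSectionVars false

variable {n : ℕ} [NeZero n]

lemma cancel2 (h : IsUnit (2 : ZMod n)) {x : ZMod n} (hx : 2 * x = 0) : x = 0 :=
  h.mul_left_cancel (by simpa using hx)

lemma card3 {a b : ZMod n} (hb : b ≠ 0) (h2b : 2 * b ≠ 0) :
    ({a, a + b, a + 2 * b} : Finset (ZMod n)).card = 3 := by
  rw [Finset.card_insert_of_notMem, Finset.card_insert_of_notMem, Finset.card_singleton]
  · simp only [Finset.mem_singleton]
    intro h; exact hb (by linear_combination -h)
  · simp only [Finset.mem_insert, Finset.mem_singleton]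
    push_neg
    exact ⟨fun h => hb (by linear_combination -h), fun h => h2b (by linear_combination -h)⟩

lemma sum3 {a b : ZMod n} (hb : b ≠ 0) (h2b : 2 * b ≠ 0) :
    ({a, a + b, a + 2 * b} : Finset (ZMod n)).sum id = 3 * a + 3 * b := by
  rw [Finset.sum_insert, Finset.sum_insert, Finset.sum_singleton]
  · simp only [id]; ring
  · simp only [Finset.mem_singleton]
    intro h; exact hb (by linear_combination -h)
  · simp only [Finset.mem_insert, Finset.mem_singleton]
    push_neg
    exact ⟨fun h => hb (by linear_combination -h), fun h => h2b (by linear_combination -h)⟩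

lemma ap_eq (h2 : IsUnit (2 : ZMod n)) (h3 : IsUnit (3 : ZMod n))
    {a b c d : ZMod n} (hb : b ≠ 0) (hd : d ≠ 0)
    (h : ({a, a + b, a + 2 * b} : Finset (ZMod n)) = {c, c + d, c + 2 * d}) :
    (c = a ∧ d = b) ∨ (c = a + 2 * b ∧ d = -b) := by
  have h2b : 2 * b ≠ 0 := fun hx => hb (cancel2 h2 hx)
  have h2d : 2 * d ≠ 0 := fun hx => hd (cancel2 h2 hx)
  have hsum : 3 * a + 3 * b = 3 * c + 3 * d := by
    rw [← sum3 hb h2b, ← sum3 hd h2d, h]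
  have hm : a + b = c + d := by
    have h' : (3 : ZMod n) * (a + b) = 3 * (c + d) := by linear_combination hsum
    exact h3.mul_left_cancel (by simpa using h')
  have hmem : c + 2 * d ∈ ({a, a + b, a + 2 * b} : Finset (ZMod n)) := by
    rw [h]; simp
  simp only [Finset.mem_insert, Finset.mem_singleton] at hmem
  rcases hmem with h1 | h1 | h1
  · exact Or.inr ⟨by linear_combination -h1 - 2 * hm, by linear_combination h1 + hm⟩
  · exact absurd (by linear_combination h1 + hm) hd
  · exact Or.inl ⟨by linear_combination -h1 - 2 * hm, by linear_combination h1 + hm⟩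

def sgn (χ : ZMod n → Fin 2) (x : ZMod n) : ℤ := if χ x = 0 then 1 else -1

lemma sgn_cases (χ : ZMod n → Fin 2) (x : ZMod n) : sgn χ x = 1 ∨ sgn χ x = -1 := by
  unfold sgn; split <;> simp

lemma chi_eq_iff (χ : ZMod n → Fin 2) (x y : ZMod n) :
    χ x = χ y ↔ sgn χ x = sgn χ y := by
  have hx : χ x = 0 ∨ χ x = 1 := by omega
  have hy : χ y = 0 ∨ χ y = 1 := by omega
  rcases hx with h | h <;> rcases hy with h' | h' <;> simp [sgn, h, h']

lemma quad (u v w : ℤ) (hu : u = 1 ∨ u = -1) (hv : v = 1 ∨ v = -1) (hw : w = 1 ∨ w = -1) :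
    1 + u * v + v * w + u * w = if u = v ∧ u = w then 4 else 0 := by
  rcases hu with rfl | rfl <;> rcases hv with rfl | rfl <;> rcases hw with rfl | rfl <;> norm_num

lemma shiftL (f : ZMod n → ℤ) (a : ZMod n) : ∑ b, f (a + b) = ∑ b, f b :=
  Fintype.sum_equiv (Equiv.addLeft a) _ _ (fun _ => rfl)

lemma shiftR (f : ZMod n → ℤ) (b : ZMod n) : ∑ a, f (a + b) = ∑ a, f a :=
  Fintype.sum_equiv (Equiv.addRight b) _ _ (fun _ => rfl)

lemma shift2 (h2 : IsUnit (2 : ZMod n)) (f : ZMod n → ℤ) : ∑ b, f (2 * b) = ∑ b, f b :=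
  Fintype.sum_bijective _ (Units.mulLeft_bijective h2.unit) _ _ (fun b => by simp)

lemma identity (h2 : IsUnit (2 : ZMod n)) (χ : ZMod n → Fin 2) :
    4 * (((Finset.univ.filter (fun p : ZMod n × ZMod n =>
        χ p.1 = χ (p.1 + p.2) ∧ χ p.1 = χ (p.1 + 2 * p.2))).card : ℤ))
      = (n : ℤ)^2 + 3 * (∑ x, sgn χ x)^2 := by
  set S := ∑ x, sgn χ x with hS
  have key : ∑ a : ZMod n, ∑ b : ZMod n,
      (1 + sgn χ a * sgn χ (a + b) + sgn χ (a + b) * sgn χ (a + 2 * b)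
        + sgn χ a * sgn χ (a + 2 * b)) = (n : ℤ)^2 + 3 * S^2 := by
    have K0 : ∑ _a : ZMod n, ∑ _b : ZMod n, (1 : ℤ) = (n : ℤ)^2 := by
      simp [Finset.sum_const, Finset.card_univ, ZMod.card]; ring
    have K1 : ∑ a : ZMod n, ∑ b : ZMod n, sgn χ a * sgn χ (a + b) = S^2 := by
      have : ∀ a : ZMod n, ∑ b : ZMod n, sgn χ a * sgn χ (a + b) = sgn χ a * S := by
        intro a
        rw [← Finset.mul_sum]
        rw [shiftL (sgn χ) a]
      rw [Finset.sum_congr rfl (fun a _ => this a), ← Finset.sum_mul]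
      ring
    have K3 : ∑ a : ZMod n, ∑ b : ZMod n, sgn χ a * sgn χ (a + 2 * b) = S^2 := by
      have : ∀ a : ZMod n, ∑ b : ZMod n, sgn χ a * sgn χ (a + 2 * b) = sgn χ a * S := by
        intro a
        rw [← Finset.mul_sum]
        rw [shift2 h2 (fun b => sgn χ (a + b)), shiftL (sgn χ) a]
      rw [Finset.sum_congr rfl (fun a _ => this a), ← Finset.sum_mul]
      ring
    have K2 : ∑ a : ZMod n, ∑ b : ZMod n, sgn χ (a + b) * sgn χ (a + 2 * b) = S^2 := by
      rw [Finset.sum_comm]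
      have : ∀ b : ZMod n, ∑ a : ZMod n, sgn χ (a + b) * sgn χ (a + 2 * b)
          = ∑ c : ZMod n, sgn χ c * sgn χ (c + b) := by
        intro b
        have e : ∀ a : ZMod n, a + 2 * b = (a + b) + b := fun a => by ring
        calc ∑ a : ZMod n, sgn χ (a + b) * sgn χ (a + 2 * b)
            = ∑ a : ZMod n, sgn χ (a + b) * sgn χ ((a + b) + b) := by
              exact Finset.sum_congr rfl (fun a _ => by rw [e a])
          _ = ∑ c : ZMod n, sgn χ c * sgn χ (c + b) :=
              shiftR (fun c => sgn χ c * sgn χ (c + b)) b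
      rw [Finset.sum_congr rfl (fun b _ => this b), Finset.sum_comm]
      have : ∀ c : ZMod n, ∑ b : ZMod n, sgn χ c * sgn χ (c + b) = sgn χ c * S := by
        intro c
        rw [← Finset.mul_sum, shiftL (sgn χ) c]
      rw [Finset.sum_congr rfl (fun c _ => this c), ← Finset.sum_mul]
      ring
    calc ∑ a : ZMod n, ∑ b : ZMod n,
        (1 + sgn χ a * sgn χ (a + b) + sgn χ (a + b) * sgn χ (a + 2 * b)
          + sgn χ a * sgn χ (a + 2 * b))
        = (∑ _a : ZMod n, ∑ _b : ZMod n, (1:ℤ))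
          + (∑ a : ZMod n, ∑ b : ZMod n, sgn χ a * sgn χ (a + b))
          + (∑ a : ZMod n, ∑ b : ZMod n, sgn χ (a + b) * sgn χ (a + 2 * b))
          + (∑ a : ZMod n, ∑ b : ZMod n, sgn χ a * sgn χ (a + 2 * b)) := by
          simp [Finset.sum_add_distrib]
      _ = (n : ℤ)^2 + 3 * S^2 := by rw [K0, K1, K2, K3]; ring
  have pw : ∀ p : ZMod n × ZMod n,
      (if (χ p.1 = χ (p.1 + p.2) ∧ χ p.1 = χ (p.1 + 2 * p.2)) then (4:ℤ) else 0)
      = 1 + sgn χ p.1 * sgn χ (p.1 + p.2) + sgn χ (p.1 + p.2) * sgn χ (p.1 + 2 * p.2)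
        + sgn χ p.1 * sgn χ (p.1 + 2 * p.2) := by
    intro p
    rw [quad _ _ _ (sgn_cases χ p.1) (sgn_cases χ (p.1 + p.2)) (sgn_cases χ (p.1 + 2 * p.2))]
    simp only [chi_eq_iff χ]
  calc 4 * (((Finset.univ.filter (fun p : ZMod n × ZMod n =>
        χ p.1 = χ (p.1 + p.2) ∧ χ p.1 = χ (p.1 + 2 * p.2))).card : ℤ))
      = ∑ p : ZMod n × ZMod n,
          (if (χ p.1 = χ (p.1 + p.2) ∧ χ p.1 = χ (p.1 + 2 * p.2)) then (4:ℤ) else 0) := by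
        rw [← Finset.sum_filter, Finset.sum_const, nsmul_eq_mul]; ring
    _ = (n : ℤ)^2 + 3 * S^2 := by
        rw [Finset.sum_congr rfl (fun p _ => pw p), Fintype.sum_prod_type]
        exact key

lemma pair_count (h2 : IsUnit (2 : ZMod n)) (h3 : IsUnit (3 : ZMod n)) (χ : ZMod n → Fin 2) :
    (Finset.univ.filter (fun p : ZMod n × ZMod n =>
        p.2 ≠ 0 ∧ χ p.1 = χ (p.1 + p.2) ∧ χ p.1 = χ (p.1 + 2 * p.2))).card
      = 2 * monoAPCount n χ := by
  classical
  set T := Finset.univ.filter (fun p : ZMod n × ZMod n =>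
      p.2 ≠ 0 ∧ χ p.1 = χ (p.1 + p.2) ∧ χ p.1 = χ (p.1 + 2 * p.2)) with hT
  set M := (apSets n).filter (fun s => ∀ x ∈ s, ∀ y ∈ s, χ x = χ y) with hM
  have hmap : ∀ p ∈ T, ({p.1, p.1 + p.2, p.1 + 2 * p.2} : Finset (ZMod n)) ∈ M := by
    rintro ⟨a, b⟩ hp
    simp only [hT, Finset.mem_filter, Finset.mem_univ, true_and] at hp
    obtain ⟨hb, hm1, hm2⟩ := hp
    have h2b : 2 * b ≠ 0 := fun hx => hb (cancel2 h2 hx)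
    simp only [hM, apSets, Finset.mem_filter, Finset.mem_univ, true_and]
    refine ⟨⟨⟨a, b, hb, rfl⟩, card3 hb h2b⟩, ?_⟩
    intro x hx y hy
    have key : ∀ z ∈ ({a, a + b, a + 2 * b} : Finset (ZMod n)), χ z = χ a := by
      intro z hz
      simp only [Finset.mem_insert, Finset.mem_singleton] at hz
      rcases hz with rfl | rfl | rfl
      · rfl
      · exact hm1.symm
      · exact hm2.symm
    rw [key x hx, key y hy]
  rw [Finset.card_eq_sum_card_fiberwise hmap]
  have hfib : ∀ s ∈ M,
      (T.filter (fun p : ZMod n × ZMod n =>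
        ({p.1, p.1 + p.2, p.1 + 2 * p.2} : Finset (ZMod n)) = s)).card = 2 := by
    intro s hs
    simp only [hM, apSets, Finset.mem_filter, Finset.mem_univ, true_and] at hs
    obtain ⟨⟨⟨a, b, hb, rfl⟩, _⟩, hmono⟩ := hs
    have h2b : 2 * b ≠ 0 := fun hx => hb (cancel2 h2 hx)
    have hmemA : a ∈ ({a, a + b, a + 2 * b} : Finset (ZMod n)) := by simp
    have hmemB : a + b ∈ ({a, a + b, a + 2 * b} : Finset (ZMod n)) := by simp
    have hmemC : a + 2 * b ∈ ({a, a + b, a + 2 * b} : Finset (ZMod n)) := by simp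
    have hm1 : χ a = χ (a + b) := hmono a hmemA (a + b) hmemB
    have hm2 : χ a = χ (a + 2 * b) := hmono a hmemA (a + 2 * b) hmemC
    have hset : T.filter (fun p : ZMod n × ZMod n =>
        ({p.1, p.1 + p.2, p.1 + 2 * p.2} : Finset (ZMod n)) = {a, a + b, a + 2 * b})
        = {(a, b), (a + 2 * b, -b)} := by
      ext ⟨c, d⟩
      simp only [hT, Finset.mem_filter, Finset.mem_univ, true_and, Finset.mem_insert,
        Finset.mem_singleton, Prod.mk.injEq]
      constructor
      · rintro ⟨⟨hd, _, _⟩, heq⟩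
        rcases ap_eq h2 h3 hb hd heq.symm with ⟨h1, h2'⟩ | ⟨h1, h2'⟩
        · exact Or.inl ⟨h1, h2'⟩
        · exact Or.inr ⟨h1, h2'⟩
      · rintro (⟨rfl, rfl⟩ | ⟨rfl, rfl⟩)
        · exact ⟨⟨hb, hm1, hm2⟩, rfl⟩
        · refine ⟨⟨fun hx => hb (by simpa using hx), ?_, ?_⟩, ?_⟩
          · have e : a + 2 * b + -b = a + b := by ring
            rw [e, ← hm1, hm2]
          · have e : a + 2 * b + 2 * -b = a := by ring
            rw [e]
            exact hm2.symm
          · have e1 : a + 2 * b + -b = a + b := by ring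
            have e2 : a + 2 * b + 2 * -b = a := by ring
            rw [e1, e2]
            ext x
            simp only [Finset.mem_insert, Finset.mem_singleton]
            tauto
    rw [hset]
    rw [Finset.card_insert_of_notMem, Finset.card_singleton]
    simp only [Finset.mem_singleton, Prod.mk.injEq, not_and]
    intro h1 h2'
    exact h2b (by linear_combination h2')
  rw [Finset.sum_congr rfl hfib, Finset.sum_const, smul_eq_mul, mul_comm]
  rfl

lemma split_card (χ : ZMod n → Fin 2) :
    (Finset.univ.filter (fun p : ZMod n × ZMod n =>
        χ p.1 = χ (p.1 + p.2) ∧ χ p.1 = χ (p.1 + 2 * p.2))).card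
      = (Finset.univ.filter (fun p : ZMod n × ZMod n =>
        p.2 ≠ 0 ∧ χ p.1 = χ (p.1 + p.2) ∧ χ p.1 = χ (p.1 + 2 * p.2))).card + n := by
  classical
  set s := Finset.univ.filter (fun p : ZMod n × ZMod n =>
      χ p.1 = χ (p.1 + p.2) ∧ χ p.1 = χ (p.1 + 2 * p.2)) with hs
  have h1 : (s.filter (fun p => ¬ p.2 = 0)).card + (s.filter (fun p => p.2 = 0)).card
      = s.card := by
    rw [add_comm]
    exact Finset.card_filter_add_card_filter_not _
  have h2 : s.filter (fun p => ¬ p.2 = 0)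
      = Finset.univ.filter (fun p : ZMod n × ZMod n =>
        p.2 ≠ 0 ∧ χ p.1 = χ (p.1 + p.2) ∧ χ p.1 = χ (p.1 + 2 * p.2)) := by
    rw [hs, Finset.filter_filter]
    apply Finset.filter_congr
    intro p _
    tauto
  have h3 : (s.filter (fun p => p.2 = 0)).card = n := by
    have : s.filter (fun p => p.2 = 0)
        = Finset.univ.map ⟨fun a : ZMod n => ((a, 0) : ZMod n × ZMod n),
            fun a b h => by simpa [Prod.ext_iff] using h⟩ := by
      ext ⟨c, d⟩
      simp only [hs, Finset.mem_filter, Finset.mem_univ, true_and, Finset.mem_map,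
        Function.Embedding.coeFn_mk, Prod.mk.injEq]
      constructor
      · rintro ⟨_, rfl⟩
        exact ⟨c, rfl⟩
      · rintro ⟨a, rfl, rfl⟩
        simp
    rw [this, Finset.card_map, Finset.card_univ, ZMod.card]
  rw [h2, h3] at h1
  omega

lemma sgn_odd_sum (hodd : Odd n) (χ : ZMod n → Fin 2) : Odd (∑ x, sgn χ x) := by
  have h1 : ∀ x : ZMod n, sgn χ x % 2 = 1 := by
    intro x
    unfold sgn
    split <;> decide
  have h2 : (∑ x, sgn χ x) % 2 = 1 := by
    rw [Finset.sum_int_mod]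
    simp only [h1]
    rw [Finset.sum_const, Finset.card_univ, ZMod.card, nsmul_eq_mul, mul_one]
    rcases hodd with ⟨k, rfl⟩
    push_cast
    omega
  rw [Int.odd_iff]
  exact h2

lemma balanced_sum (hodd : Odd n) :
    ∑ x : ZMod n, sgn (fun y : ZMod n => if y.val < (n + 1) / 2 then 0 else 1) x = 1 := by
  classical
  set c := (n + 1) / 2 with hc
  have hpt : ∀ x : ZMod n,
      sgn (fun y : ZMod n => if y.val < c then (0 : Fin 2) else 1) x
        = if x.val < c then (1 : ℤ) else -1 := by
    intro x
    by_cases h : x.val < c <;> simp [sgn, h]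
  rw [Finset.sum_congr rfl (fun x _ => hpt x)]
  rw [Finset.sum_ite, Finset.sum_const, Finset.sum_const]
  have hcard : (Finset.univ.filter (fun x : ZMod n => x.val < c)).card = c := by
    have hcn : c ≤ n := by
      have := NeZero.pos n
      omega
    rw [← Finset.card_range c]
    apply Finset.card_bij (fun (x : ZMod n) _ => x.val)
    · intro x hx
      simp only [Finset.mem_filter] at hx
      simpa using hx.2
    · intro x hx y hy h
      exact ZMod.val_injective n h
    · intro m hm
      simp only [Finset.mem_range] at hm
      have hmn : m < n := lt_of_lt_of_le hm hcn
      refine ⟨(m : ZMod n), ?_, ?_⟩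
      · simp [Finset.mem_filter, ZMod.val_cast_of_lt hmn, hm]
      · rw [ZMod.val_cast_of_lt hmn]
  have hcard2 : (Finset.univ.filter (fun x : ZMod n => ¬ x.val < c)).card = n - c := by
    have := Finset.card_filter_add_card_filter_not
      (s := (Finset.univ : Finset (ZMod n))) (p := fun x : ZMod n => x.val < c)
    rw [Finset.card_univ, ZMod.card] at this
    omega
  rw [hcard, hcard2]
  rcases hodd with ⟨k, rfl⟩
  have hc' : c = k + 1 := by omega
  rw [hc']
  have hnc : 2 * k + 1 - (k + 1) = k := by omega
  rw [hnc]
  simp only [nsmul_eq_mul, mul_one, mul_neg]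
  push_cast
  ring

lemma grand (hu2 : IsUnit (2 : ZMod n)) (hu3 : IsUnit (3 : ZMod n)) (χ : ZMod n → Fin 2) :
    8 * (monoAPCount n χ : ℤ) = (n : ℤ)^2 - 4 * (n : ℤ) + 3 * (∑ x, sgn χ x)^2 := by
  have e1 := identity hu2 χ
  rw [split_card χ, pair_count hu2 hu3 χ] at e1
  push_cast at e1
  linarith

end Ap11

theorem stmt_11 (n : ℕ) [NeZero n] (hodd : Odd n) (h3 : ¬ (3 ∣ n)) :
    IsLeast {k : ℤ | ∃ χ : ZMod n → Fin 2, k = monoAPCount n χ}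
      (((n : ℤ) - 1) * ((n : ℤ) - 3) / 8) := by
  have hu2 : IsUnit (2 : ZMod n) := by
    have := (ZMod.isUnit_iff_coprime 2 n).2 (Nat.coprime_two_left.2 hodd)
    simpa using this
  have hu3 : IsUnit (3 : ZMod n) := by
    have := (ZMod.isUnit_iff_coprime 3 n).2
      ((Nat.Prime.coprime_iff_not_dvd (by norm_num)).2 h3)
    simpa using this
  constructor
  · refine ⟨fun y : ZMod n => if y.val < (n + 1) / 2 then 0 else 1, ?_⟩
    have hg := Ap11.grand hu2 hu3 (fun y : ZMod n => if y.val < (n + 1) / 2 then 0 else 1)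
    rw [Ap11.balanced_sum hodd] at hg
    have hprod : ((n : ℤ) - 1) * ((n : ℤ) - 3)
        = 8 * (monoAPCount n (fun y : ZMod n => if y.val < (n + 1) / 2 then 0 else 1) : ℤ) := by
      rw [hg]; ring
    rw [hprod, Int.mul_ediv_cancel_left _ (by norm_num)]
  · rintro k ⟨χ, rfl⟩
    have hg := Ap11.grand hu2 hu3 χ
    have hS : 1 ≤ (∑ x, Ap11.sgn χ x)^2 := by
      have ho := Ap11.sgn_odd_sum hodd χ
      have hne : (∑ x, Ap11.sgn χ x) ≠ 0 := by
        intro h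
        rw [h] at ho
        simpa using ho
      nlinarith [sq_abs (∑ x, Ap11.sgn χ x), Int.one_le_abs hne]
    have hle : ((n : ℤ) - 1) * ((n : ℤ) - 3) ≤ 8 * (monoAPCount n χ : ℤ) := by nlinarith
    calc ((n : ℤ) - 1) * ((n : ℤ) - 3) / 8
        ≤ (8 * (monoAPCount n χ : ℤ)) / 8 := Int.ediv_le_ediv (by norm_num) hle
      _ = (monoAPCount n χ : ℤ) := Int.mul_ediv_cancel_left _ (by norm_num)
end

section
/- Let n be a positive integer with n ≡ 0 (mod 8) and n not divisible by 3. Then R(3, Z_n, 2) = (n^2 - 8n)/8, where R(3, Z_n, 2) is the minimum number of monochromatic 3-term arithmetic progressions over all 2-colorings of Z_n. -/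
set_option linter.unusedSectionVars false

namespace Stmt12Aux

variable {n : ℕ} [NeZero n]

def F (χ : ZMod n → Fin 2) (x : ZMod n) : ℤ := if χ x = 0 then 1 else -1

def pr (x : ZMod n) : ZMod 2 := (x.val : ZMod 2)

def mm (n : ℕ) [NeZero n] : ZMod n := ((n / 2 : ℕ) : ZMod n)

lemma cast_mod (h2 : 2 ∣ n) (a : ℕ) : ((a % n : ℕ) : ZMod 2) = (a : ZMod 2) := by
  rw [ZMod.natCast_eq_natCast_iff]
  exact (Nat.mod_modEq a n).of_dvd h2

lemma pr_add (h2 : 2 ∣ n) (x y : ZMod n) : pr (x + y) = pr x + pr y := by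
  unfold pr
  rw [ZMod.val_add, cast_mod h2]
  push_cast
  ring

lemma pr_two_mul (h2 : 2 ∣ n) (d : ZMod n) : pr (2 * d) = 0 := by
  have h : (2 : ZMod n) * d = d + d := by ring
  rw [h, pr_add h2]
  have h2' : ∀ c : ZMod 2, c + c = 0 := by decide
  exact h2' _

lemma two_mul_mm (h2 : 2 ∣ n) : 2 * mm n = 0 := by
  have hn : n ≠ 0 := NeZero.ne n
  have h : (2 * (n / 2) : ℕ) = n := by omega
  have h' : ((2 * (n / 2) : ℕ) : ZMod n) = 0 := by rw [h]; exact ZMod.natCast_self n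
  push_cast at h'
  exact h'

lemma mm_ne_zero (h2 : 2 ∣ n) : mm n ≠ 0 := by
  have hn : n ≠ 0 := NeZero.ne n
  unfold mm
  rw [Ne, ZMod.natCast_eq_zero_iff]
  intro h
  have := Nat.le_of_dvd (by omega) h
  omega

lemma kernel (h2 : 2 ∣ n) (e : ZMod n) (he : 2 * e = 0) : e = 0 ∨ e = mm n := by
  have hn : n ≠ 0 := NeZero.ne n
  have h1 : ((2 * e.val : ℕ) : ZMod n) = 0 := by
    push_cast
    rw [ZMod.natCast_val, ZMod.cast_id]
    exact he
  rw [ZMod.natCast_eq_zero_iff] at h1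
  obtain ⟨m, hm⟩ := h2
  have hmpos : 0 < m := by omega
  have hmd : m ∣ e.val := by
    have : 2 * m ∣ 2 * e.val := by rwa [← hm]
    exact (mul_dvd_mul_iff_left (two_ne_zero)).mp this
  obtain ⟨j, hj⟩ := hmd
  have hv : e.val < n := ZMod.val_lt e
  have hj2 : j < 2 := by
    by_contra hc
    push_neg at hc
    have : m * 2 ≤ m * j := Nat.mul_le_mul_left m hc
    omega
  have hval : e.val = 0 ∨ e.val = n / 2 := by
    interval_cases j <;> omega
  have hee : ((e.val : ℕ) : ZMod n) = e := by
    rw [ZMod.natCast_val, ZMod.cast_id]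
  rcases hval with h | h
  · left
    have h0 : ((0:ℕ) : ZMod n) = e := by rw [← h]; exact hee
    simpa using h0.symm
  · right
    have h0 : ((n / 2 : ℕ) : ZMod n) = e := by rw [← h]; exact hee
    exact h0.symm

lemma exists_double (h2 : 2 ∣ n) (c : ZMod n) (hc : pr c = 0) : ∃ d, 2 * d = c := by
  unfold pr at hc
  have h2v : 2 ∣ c.val := by
    rwa [ZMod.natCast_eq_zero_iff] at hc
  refine ⟨((c.val / 2 : ℕ) : ZMod n), ?_⟩
  have h : (2 * (c.val / 2) : ℕ) = c.val := by omega
  have h' : ((2 * (c.val / 2) : ℕ) : ZMod n) = ((c.val : ℕ) : ZMod n) := by rw [h]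
  push_cast at h'
  rw [ZMod.natCast_val, ZMod.cast_id] at h'
  exact h'

lemma pr_mm (h4 : 4 ∣ n) : pr (mm n) = 0 := by
  unfold pr mm
  have hn : n ≠ 0 := NeZero.ne n
  have hlt : n / 2 < n := by omega
  rw [ZMod.val_natCast_of_lt hlt, ZMod.natCast_eq_zero_iff]
  omega


open Finset

lemma fiber_card (h2 : 2 ∣ n) (a x : ZMod n) (hx : pr x = pr a) :
    (Finset.univ.filter fun d : ZMod n => a + 2 * d = x).card = 2 := by
  have hxa : pr (x - a) = 0 := by
    have h := pr_add h2 a (x - a)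
    simp only [add_sub_cancel] at h
    rw [hx] at h
    have h' : ∀ u v : ZMod 2, u = u + v → v = 0 := by decide
    exact h' _ _ h
  obtain ⟨d₀, hd₀⟩ := exists_double h2 (x - a) hxa
  have hset : (Finset.univ.filter fun d : ZMod n => a + 2 * d = x) = {d₀, d₀ + mm n} := by
    ext d
    simp only [Finset.mem_filter, Finset.mem_univ, true_and, Finset.mem_insert,
      Finset.mem_singleton]
    constructor
    · intro hd
      have hk : 2 * (d - d₀) = 0 := by
        have : 2 * d = x - a := by linear_combination hd
        rw [mul_sub, this, hd₀]; ring
      rcases kernel h2 _ hk with h | h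
      · left; linear_combination h
      · right; linear_combination h
    · rintro (rfl | rfl)
      · linear_combination hd₀
      · have := two_mul_mm (n := n) h2
        linear_combination hd₀ + this
  rw [hset, Finset.card_insert_of_notMem, Finset.card_singleton]
  simp only [Finset.mem_singleton]
  intro h
  exact mm_ne_zero h2 (by linear_combination -h)

def S (χ : ZMod n → Fin 2) : ℤ := ∑ x : ZMod n, F χ x
def E (χ : ZMod n → Fin 2) (c : ZMod 2) : ℤ := ∑ x : ZMod n, if pr x = c then F χ x else 0
def P (χ : ZMod n → Fin 2) : ℤ := ∑ x : ZMod n, F χ x * F χ (x + mm n)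

lemma E_eq_filter (χ : ZMod n → Fin 2) (c : ZMod 2) :
    E χ c = ∑ x ∈ Finset.univ.filter (fun x : ZMod n => pr x = c), F χ x :=
  (Finset.sum_filter _ _).symm

lemma claimA (h2 : 2 ∣ n) (χ : ZMod n → Fin 2) (a : ZMod n) :
    ∑ d : ZMod n, F χ (a + 2 * d) = 2 * E χ (pr a) := by
  have hmaps : ∀ d : ZMod n, d ∈ Finset.univ →
      a + 2 * d ∈ Finset.univ.filter (fun x : ZMod n => pr x = pr a) := by
    intro d _
    simp only [Finset.mem_filter, Finset.mem_univ, true_and]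
    rw [pr_add h2, pr_two_mul h2, add_zero]
  rw [← Finset.sum_fiberwise_of_maps_to hmaps (fun d => F χ (a + 2 * d))]
  rw [E_eq_filter, Finset.mul_sum]
  refine Finset.sum_congr rfl fun x hx => ?_
  simp only [Finset.mem_filter, Finset.mem_univ, true_and] at hx
  have : ∀ d ∈ Finset.univ.filter (fun d : ZMod n => a + 2 * d = x),
      F χ (a + 2 * d) = F χ x := by
    intro d hd
    simp only [Finset.mem_filter, Finset.mem_univ, true_and] at hd
    rw [hd]
  rw [Finset.sum_congr rfl this, Finset.sum_const, fiber_card h2 a x hx]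
  ring


def I (χ : ZMod n → Fin 2) (a d : ZMod n) : ℤ :=
  if χ a = χ (a + d) ∧ χ (a + d) = χ (a + 2 * d) then 1 else 0

def Tsum (χ : ZMod n → Fin 2) : ℤ := ∑ a : ZMod n, ∑ d : ZMod n, I χ a d

lemma sum_shift (χ : ZMod n → Fin 2) (a : ZMod n) : ∑ d : ZMod n, F χ (a + d) = S χ :=
  Fintype.sum_equiv (Equiv.addLeft a) (fun d => F χ (a + d)) (F χ) (fun _ => rfl)

lemma sum_univ_zmod2 (g : ZMod 2 → ℤ) : ∑ c : ZMod 2, g c = g 0 + g 1 := by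
  have h : (Finset.univ : Finset (ZMod 2)) = {0, 1} := by decide
  rw [h, Finset.sum_insert (by decide), Finset.sum_singleton]

lemma identity1 (h2 : 2 ∣ n) (χ : ZMod n → Fin 2) :
    4 * Tsum χ = (n : ℤ) ^ 2 + 2 * S χ ^ 2 + 2 * E χ 0 ^ 2 + 2 * E χ 1 ^ 2 := by
  have point : ∀ u v w : Fin 2, (4:ℤ) * (if u = v ∧ v = w then 1 else 0) =
      1 + (if u = 0 then (1:ℤ) else -1) * (if v = 0 then 1 else -1)
        + (if v = 0 then (1:ℤ) else -1) * (if w = 0 then 1 else -1)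
        + (if u = 0 then (1:ℤ) else -1) * (if w = 0 then 1 else -1) := by decide
  have expand : 4 * Tsum χ = ∑ a : ZMod n, ∑ d : ZMod n,
      (1 + F χ a * F χ (a + d) + F χ (a + d) * F χ (a + 2 * d)
        + F χ a * F χ (a + 2 * d)) := by
    rw [Tsum, Finset.mul_sum]
    refine Finset.sum_congr rfl fun a _ => ?_
    rw [Finset.mul_sum]
    exact Finset.sum_congr rfl fun d _ => point (χ a) (χ (a + d)) (χ (a + 2 * d))
  rw [expand]
  have split : ∀ a : ZMod n, ∑ d : ZMod n,
      (1 + F χ a * F χ (a + d) + F χ (a + d) * F χ (a + 2 * d)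
        + F χ a * F χ (a + 2 * d))
      = (n : ℤ) + F χ a * S χ + (∑ d : ZMod n, F χ (a + d) * F χ (a + 2 * d))
        + F χ a * (2 * E χ (pr a)) := by
    intro a
    rw [Finset.sum_add_distrib, Finset.sum_add_distrib, Finset.sum_add_distrib]
    congr 1
    · congr 1
      · congr 1
        · simp [Finset.card_univ, ZMod.card]
        · rw [← Finset.mul_sum, sum_shift]
    · rw [← Finset.mul_sum, claimA h2]
  rw [Finset.sum_congr rfl fun a _ => split a]
  rw [Finset.sum_add_distrib, Finset.sum_add_distrib, Finset.sum_add_distrib]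
  have t1 : ∑ _a : ZMod n, (n : ℤ) = (n:ℤ)^2 := by
    simp [Finset.card_univ, ZMod.card]; ring
  have t2 : ∑ a : ZMod n, F χ a * S χ = S χ ^ 2 := by
    rw [← Finset.sum_mul, ← S]; ring
  have t3 : ∑ a : ZMod n, ∑ d : ZMod n, F χ (a + d) * F χ (a + 2 * d) = S χ ^ 2 := by
    rw [Finset.sum_comm]
    have inner : ∀ d : ZMod n, ∑ a : ZMod n, F χ (a + d) * F χ (a + 2 * d)
        = ∑ x : ZMod n, F χ x * F χ (x + d) := by
      intro d
      refine Fintype.sum_equiv (Equiv.addRight d) _ _ fun a => ?_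
      simp only [Equiv.coe_addRight]
      rw [show a + 2 * d = a + d + d by ring]
    rw [Finset.sum_congr rfl fun d _ => inner d, Finset.sum_comm]
    calc ∑ x : ZMod n, ∑ d : ZMod n, F χ x * F χ (x + d)
        = ∑ x : ZMod n, F χ x * S χ := by
          refine Finset.sum_congr rfl fun x _ => ?_
          rw [← Finset.mul_sum, sum_shift]
      _ = S χ ^ 2 := t2
  have t4 : ∑ a : ZMod n, F χ a * (2 * E χ (pr a))
      = 2 * E χ 0 ^ 2 + 2 * E χ 1 ^ 2 := by
    have fib : ∑ c : ZMod 2, ∑ a ∈ Finset.univ.filter (fun a : ZMod n => pr a = c),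
        F χ a * (2 * E χ (pr a)) = ∑ a : ZMod n, F χ a * (2 * E χ (pr a)) :=
      Finset.sum_fiberwise_of_maps_to (fun a _ => Finset.mem_univ (pr a)) _
    rw [← fib]
    have inner : ∀ c : ZMod 2, ∑ a ∈ Finset.univ.filter (fun a : ZMod n => pr a = c),
        F χ a * (2 * E χ (pr a)) = 2 * E χ c ^ 2 := by
      intro c
      have : ∀ a ∈ Finset.univ.filter (fun a : ZMod n => pr a = c),
          F χ a * (2 * E χ (pr a)) = F χ a * (2 * E χ c) := by
        intro a ha
        simp only [Finset.mem_filter, Finset.mem_univ, true_and] at ha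
        rw [ha]
      rw [Finset.sum_congr rfl this, ← Finset.sum_mul, ← E_eq_filter]
      ring
    rw [Finset.sum_congr rfl fun c _ => inner c, sum_univ_zmod2]
  rw [t1, t2, t3, t4]
  ring


def Dsum (χ : ZMod n → Fin 2) : ℤ := ∑ a : ZMod n, if χ a = χ (a + mm n) then 1 else 0

lemma identityD (χ : ZMod n → Fin 2) : 2 * Dsum χ = (n : ℤ) + P χ := by
  have point : ∀ u v : Fin 2, (2:ℤ) * (if u = v then 1 else 0) =
      1 + (if u = 0 then (1:ℤ) else -1) * (if v = 0 then 1 else -1) := by decide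
  rw [Dsum, Finset.mul_sum]
  rw [Finset.sum_congr rfl fun a (_ : a ∈ Finset.univ) => point (χ a) (χ (a + mm n))]
  rw [Finset.sum_add_distrib]
  simp [P, Finset.card_univ, ZMod.card, F]

def J (χ : ZMod n → Fin 2) (a d : ZMod n) : ℤ :=
  if (d ≠ 0 ∧ d ≠ mm n) ∧ (χ a = χ (a + d) ∧ χ (a + d) = χ (a + 2 * d)) then 1 else 0

def Qint (χ : ZMod n → Fin 2) : ℤ := ∑ a : ZMod n, ∑ d : ZMod n, J χ a d

lemma T_split (h2 : 2 ∣ n) (χ : ZMod n → Fin 2) :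
    Tsum χ = Qint χ + (n : ℤ) + Dsum χ := by
  have key : ∀ a : ZMod n, ∑ d : ZMod n, I χ a d
      = (∑ d : ZMod n, J χ a d) + (1 + (if χ a = χ (a + mm n) then (1:ℤ) else 0)) := by
    intro a
    have hsub : ({0, mm n} : Finset (ZMod n)) ⊆ Finset.univ := Finset.subset_univ _
    rw [← Finset.sum_sdiff hsub]
    congr 1
    · have hJ : ∑ d : ZMod n, J χ a d
          = ∑ d ∈ Finset.univ \ {0, mm n}, J χ a d := by
        refine (Finset.sum_subset (Finset.sdiff_subset) ?_).symm
        intro d _ hd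
        simp only [Finset.mem_sdiff, Finset.mem_univ, true_and, Finset.mem_insert,
          Finset.mem_singleton, not_not, not_and, not_forall] at hd
        have hd' : d = 0 ∨ d = mm n := by tauto
        unfold J
        rw [if_neg]
        rintro ⟨⟨hd0, hdm⟩, -⟩
        rcases hd' with h | h
        · exact hd0 h
        · exact hdm h
      rw [hJ]
      refine Finset.sum_congr rfl fun d hd => ?_
      simp only [Finset.mem_sdiff, Finset.mem_univ, true_and, Finset.mem_insert,
        Finset.mem_singleton] at hd
      push_neg at hd
      unfold I J
      exact (if_congr (and_iff_right hd) rfl rfl).symm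
    · have h0m : (0 : ZMod n) ∉ ({mm n} : Finset (ZMod n)) := by
        simp only [Finset.mem_singleton]
        exact fun h => mm_ne_zero h2 h.symm
      rw [Finset.sum_insert h0m, Finset.sum_singleton]
      congr 1
      · unfold I
        rw [if_pos]
        constructor <;> simp
      · have hmm : a + 2 * mm n = a := by rw [two_mul_mm h2, add_zero]
        unfold I
        rw [hmm]
        exact if_congr ⟨And.left, fun h => ⟨h, h.symm⟩⟩ rfl rfl
  rw [Tsum, Finset.sum_congr rfl fun a _ => key a]
  rw [Finset.sum_add_distrib, Finset.sum_add_distrib, ← Qint, ← Dsum]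
  simp only [Finset.sum_const, Finset.card_univ, ZMod.card, nsmul_eq_mul, mul_one]
  ring


def Qset (χ : ZMod n → Fin 2) : Finset (ZMod n × ZMod n) :=
  Finset.univ.filter (fun p => (p.2 ≠ 0 ∧ p.2 ≠ mm n) ∧
    (χ p.1 = χ (p.1 + p.2) ∧ χ (p.1 + p.2) = χ (p.1 + 2 * p.2)))

lemma Qint_eq_card (χ : ZMod n → Fin 2) : Qint χ = ((Qset χ).card : ℤ) := by
  have h : ((Qset χ).card : ℤ) = ∑ p : ZMod n × ZMod n,
      if (p.2 ≠ 0 ∧ p.2 ≠ mm n) ∧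
        (χ p.1 = χ (p.1 + p.2) ∧ χ (p.1 + p.2) = χ (p.1 + 2 * p.2)) then (1:ℤ) else 0 := by
    rw [Qset, Finset.card_filter]
    push_cast
    rfl
  rw [h, Fintype.sum_prod_type]
  rfl

lemma card3 {a b : ZMod n} (hb : b ≠ 0) (h2b : 2 * b ≠ 0) :
    ({a, a + b, a + 2 * b} : Finset (ZMod n)).card = 3 := by
  have h1 : (a + b) ∉ ({a + 2 * b} : Finset (ZMod n)) := by
    simp only [Finset.mem_singleton]
    exact fun h => hb (by linear_combination -h)
  have h0 : a ∉ ({a + b, a + 2 * b} : Finset (ZMod n)) := by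
    simp only [Finset.mem_insert, Finset.mem_singleton]
    push_neg
    exact ⟨fun h => hb (by linear_combination -h), fun h => h2b (by linear_combination -h)⟩
  rw [Finset.card_insert_of_notMem h0, Finset.card_insert_of_notMem h1,
    Finset.card_singleton]

lemma sum3 {a b : ZMod n} (hb : b ≠ 0) (h2b : 2 * b ≠ 0) :
    ∑ x ∈ ({a, a + b, a + 2 * b} : Finset (ZMod n)), x = 3 * (a + b) := by
  have h1 : (a + b) ∉ ({a + 2 * b} : Finset (ZMod n)) := by
    simp only [Finset.mem_singleton]
    exact fun h => hb (by linear_combination -h)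
  have h0 : a ∉ ({a + b, a + 2 * b} : Finset (ZMod n)) := by
    simp only [Finset.mem_insert, Finset.mem_singleton]
    push_neg
    exact ⟨fun h => hb (by linear_combination -h), fun h => h2b (by linear_combination -h)⟩
  rw [Finset.sum_insert h0, Finset.sum_insert h1, Finset.sum_singleton]
  ring

lemma two_b_ne {a b : ZMod n} (hcard : ({a, a + b, a + 2 * b} : Finset (ZMod n)).card = 3) :
    2 * b ≠ 0 := by
  intro h
  have he : a + 2 * b = a := by linear_combination h
  have hsub : ({a, a + b, a + 2 * b} : Finset (ZMod n)) ⊆ {a, a + b} := by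
    intro x hx
    simp only [Finset.mem_insert, Finset.mem_singleton] at hx ⊢
    rcases hx with h' | h' | h'
    · exact Or.inl h'
    · exact Or.inr h'
    · rw [he] at h'; exact Or.inl h'
  have hle := Finset.card_le_card hsub
  have hle2 : ({a, a + b} : Finset (ZMod n)).card ≤ 2 :=
    (Finset.card_insert_le _ _).trans (by simp)
  omega

lemma Q_card (h2 : 2 ∣ n) (h3 : ¬ 3 ∣ n) (χ : ZMod n → Fin 2) :
    (Qset χ).card = 2 * monoAPCount n χ := by
  classical
  set t := (apSets n).filter (fun s => ∀ x ∈ s, ∀ y ∈ s, χ x = χ y) with ht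
  have H : ∀ p ∈ Qset χ, ({p.1, p.1 + p.2, p.1 + 2 * p.2} : Finset (ZMod n)) ∈ t := by
    rintro ⟨a, b⟩ hp
    simp only [Qset, Finset.mem_filter, Finset.mem_univ, true_and] at hp
    obtain ⟨⟨hb, hbm⟩, hm1, hm2⟩ := hp
    have h2b : 2 * b ≠ 0 := by
      intro h
      rcases kernel h2 b h with h' | h'
      · exact hb h'
      · exact hbm h'
    have hcard := card3 (a := a) hb h2b
    simp only [ht, Finset.mem_filter, apSets, Finset.mem_univ, true_and]
    refine ⟨⟨⟨a, b, hb, rfl⟩, hcard⟩, ?_⟩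
    intro x hx y hy
    simp only [Finset.mem_insert, Finset.mem_singleton] at hx hy
    have e3 : χ a = χ (a + 2 * b) := hm1.trans hm2
    rcases hx with rfl | rfl | rfl <;> rcases hy with rfl | rfl | rfl <;>
      first | rfl | exact hm1 | exact hm1.symm | exact hm2 | exact hm2.symm | exact e3 | exact e3.symm
  have hfib : ∀ s ∈ t, ((Qset χ).filter
      (fun p => ({p.1, p.1 + p.2, p.1 + 2 * p.2} : Finset (ZMod n)) = s)).card = 2 := by
    intro s hs
    simp only [ht, Finset.mem_filter, apSets, Finset.mem_univ, true_and] at hs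
    obtain ⟨⟨⟨a, b, hb, rfl⟩, hcard⟩, hmono⟩ := hs
    have h2b : 2 * b ≠ 0 := two_b_ne hcard
    have hbm : b ≠ mm n := by
      intro h; apply h2b; rw [h]; exact two_mul_mm h2
    have hu : IsUnit (3 : ZMod n) := by
      have := (ZMod.isUnit_prime_iff_not_dvd (n := n) (p := 3) (by norm_num)).mpr h3
      exact_mod_cast this
    have e1 : χ a = χ (a + b) := hmono a (by simp) (a + b) (by simp)
    have e2 : χ (a + b) = χ (a + 2 * b) := hmono (a + b) (by simp) (a + 2 * b) (by simp)
    have hQ : ((Qset χ).filter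
        (fun p => ({p.1, p.1 + p.2, p.1 + 2 * p.2} : Finset (ZMod n)) = {a, a + b, a + 2 * b}))
        = {(a, b), (a + 2 * b, -b)} := by
      ext ⟨a', b'⟩
      simp only [Finset.mem_filter, Qset, Finset.mem_univ, true_and, Finset.mem_insert,
        Finset.mem_singleton, Prod.mk.injEq]
      constructor
      · rintro ⟨⟨⟨hb', hbm'⟩, hm1', hm2'⟩, hset⟩
        have h2b' : 2 * b' ≠ 0 := by
          intro h
          rcases kernel h2 b' h with h' | h'
          · exact hb' h'
          · exact hbm' h'
        have hsum : (3 : ZMod n) * (a' + b') = 3 * (a + b) := by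
          have hh := sum3 (a := a') hb' h2b'
          rw [hset] at hh
          rw [← hh, sum3 hb h2b]
        have hmid : a' + b' = a + b := hu.mul_left_cancel hsum
        have ha' : a' ∈ ({a, a + b, a + 2 * b} : Finset (ZMod n)) := by
          rw [← hset]; simp
        simp only [Finset.mem_insert, Finset.mem_singleton] at ha'
        rcases ha' with h | h | h
        · exact Or.inl ⟨h, by linear_combination hmid - h⟩
        · exact absurd (show b' = 0 by linear_combination hmid - h) hb'
        · exact Or.inr ⟨h, by linear_combination hmid - h⟩
      · rintro (⟨rfl, rfl⟩ | ⟨rfl, rfl⟩)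
        · exact ⟨⟨⟨hb, hbm⟩, e1, e2⟩, rfl⟩
        · have hnb : -b ≠ 0 := neg_ne_zero.mpr hb
          have hnbm : -b ≠ mm n := by
            intro h
            apply h2b
            have h0 : 2 * (-b) = 0 := by rw [h]; exact two_mul_mm h2
            linear_combination -h0
          have r1 : a + 2 * b + -b = a + b := by ring
          have r2 : a + 2 * b + 2 * -b = a := by ring
          refine ⟨⟨⟨hnb, hnbm⟩, ?_, ?_⟩, ?_⟩
          · rw [r1]; exact e2.symm
          · rw [r1, r2]; exact e1.symm
          · rw [r1, r2]
            ext x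
            simp only [Finset.mem_insert, Finset.mem_singleton]
            tauto
    rw [hQ, Finset.card_insert_of_notMem, Finset.card_singleton]
    simp only [Finset.mem_singleton, Prod.mk.injEq, not_and]
    rintro - hh
    exact h2b (by linear_combination hh)
  calc (Qset χ).card = ∑ _s ∈ t, 2 := by
        rw [Finset.card_eq_sum_card_fiberwise H]
        exact Finset.sum_congr rfl hfib
    _ = 2 * monoAPCount n χ := by
        rw [Finset.sum_const, smul_eq_mul, mul_comm]
        rfl


lemma grand (h2 : 2 ∣ n) (h3 : ¬ 3 ∣ n) (χ : ZMod n → Fin 2) :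
    8 * (monoAPCount n χ : ℤ)
      = (n:ℤ)^2 - 6*n + 2*S χ^2 + 2*E χ 0^2 + 2*E χ 1^2 - 2*P χ := by
  have i1 := identity1 h2 χ
  have iT := T_split h2 χ
  have iD := identityD χ
  have iQ : Qint χ = 2 * (monoAPCount n χ : ℤ) := by
    rw [Qint_eq_card, Q_card h2 h3]
    push_cast
    ring
  linarith

lemma F_sq (χ : ZMod n → Fin 2) (x : ZMod n) : F χ x * F χ x = 1 := by
  unfold F; split <;> norm_num

lemma F_le (χ : ZMod n → Fin 2) (x y : ZMod n) : F χ x * F χ y ≤ 1 := by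
  unfold F; split <;> split <;> norm_num

lemma lower (h2 : 2 ∣ n) (h3 : ¬ 3 ∣ n) (χ : ZMod n → Fin 2) :
    (n:ℤ)^2 - 8*n ≤ 8 * (monoAPCount n χ : ℤ) := by
  have hP : P χ ≤ (n:ℤ) := by
    calc P χ ≤ ∑ _x : ZMod n, (1:ℤ) := Finset.sum_le_sum fun x _ => F_le χ _ _
      _ = n := by simp [Finset.card_univ, ZMod.card]
  have hg := grand h2 h3 χ
  nlinarith [sq_nonneg (S χ), sq_nonneg (E χ 0), sq_nonneg (E χ 1)]

def χ₀ (n : ℕ) [NeZero n] : ZMod n → Fin 2 := fun x =>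
  if x.val < n / 4 ∨ (n / 2 ≤ x.val ∧ x.val < n / 2 + n / 4) then 0 else 1

def qq (n : ℕ) [NeZero n] : ZMod n := ((n / 4 : ℕ) : ZMod n)

lemma F_chi0 (y : ZMod n) : F (χ₀ n) y =
    if y.val < n / 4 ∨ (n / 2 ≤ y.val ∧ y.val < n / 2 + n / 4) then 1 else -1 := by
  unfold F χ₀
  by_cases h : y.val < n / 4 ∨ (n / 2 ≤ y.val ∧ y.val < n / 2 + n / 4) <;> simp [h]

lemma F_anti (h8 : 8 ∣ n) (x : ZMod n) : F (χ₀ n) (x + qq n) = - F (χ₀ n) x := by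
  have hn : n ≠ 0 := NeZero.ne n
  have hq : (qq n).val = n / 4 := ZMod.val_natCast_of_lt (by omega)
  have hx : x.val < n := ZMod.val_lt x
  rcases lt_or_ge x.val (n - n / 4) with h | h
  · have hv : (x + qq n).val = x.val + n / 4 := by
      rw [ZMod.val_add, hq]
      exact Nat.mod_eq_of_lt (by omega)
    rw [F_chi0, F_chi0, hv]
    split_ifs <;> omega
  · have hv : (x + qq n).val = x.val + n / 4 - n := by
      rw [ZMod.val_add, hq, Nat.mod_eq_sub_mod (by omega), Nat.mod_eq_of_lt (by omega)]
    rw [F_chi0, F_chi0, hv]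
    split_ifs <;> omega

lemma pr_qq (h8 : 8 ∣ n) : pr (qq n) = 0 := by
  have hn : n ≠ 0 := NeZero.ne n
  unfold pr qq
  rw [ZMod.val_natCast_of_lt (by omega : n / 4 < n), ZMod.natCast_eq_zero_iff]
  omega

lemma mm_eq_qq_add (h8 : 8 ∣ n) : mm n = qq n + qq n := by
  unfold mm qq
  have h : n / 2 = n / 4 + n / 4 := by omega
  rw [h]
  push_cast
  ring

lemma S0 (h8 : 8 ∣ n) : S (χ₀ n) = 0 := by
  have h : ∑ x : ZMod n, F (χ₀ n) (x + qq n) = S (χ₀ n) :=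
    Fintype.sum_equiv (Equiv.addRight (qq n)) _ _ (fun _ => rfl)
  have h' : ∑ x : ZMod n, F (χ₀ n) (x + qq n) = - S (χ₀ n) := by
    rw [Finset.sum_congr rfl fun x _ => F_anti h8 x, Finset.sum_neg_distrib]
    rfl
  rw [h'] at h
  linarith

lemma E0 (h8 : 8 ∣ n) (c : ZMod 2) : E (χ₀ n) c = 0 := by
  have h2 : 2 ∣ n := dvd_trans (by norm_num) h8
  have h : ∑ x : ZMod n, (if pr (x + qq n) = c then F (χ₀ n) (x + qq n) else 0)
      = E (χ₀ n) c :=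
    Fintype.sum_equiv (Equiv.addRight (qq n)) _ _ (fun _ => rfl)
  have h' : ∑ x : ZMod n, (if pr (x + qq n) = c then F (χ₀ n) (x + qq n) else 0)
      = - E (χ₀ n) c := by
    have point : ∀ x : ZMod n, (if pr (x + qq n) = c then F (χ₀ n) (x + qq n) else 0)
        = - (if pr x = c then F (χ₀ n) x else 0) := by
      intro x
      rw [pr_add h2, pr_qq h8, add_zero, F_anti h8]
      split <;> simp
    rw [Finset.sum_congr rfl fun x _ => point x, Finset.sum_neg_distrib]
    rfl
  rw [h'] at h
  linarith

lemma P0 (h8 : 8 ∣ n) : P (χ₀ n) = (n:ℤ) := by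
  unfold P
  have point : ∀ x : ZMod n, F (χ₀ n) x * F (χ₀ n) (x + mm n) = 1 := by
    intro x
    rw [mm_eq_qq_add h8, ← add_assoc, F_anti h8, F_anti h8, neg_neg, F_sq]
  rw [Finset.sum_congr rfl fun x _ => point x]
  simp [Finset.card_univ, ZMod.card]

lemma upper (h8 : 8 ∣ n) (h3 : ¬ 3 ∣ n) :
    8 * (monoAPCount n (χ₀ n) : ℤ) = (n:ℤ)^2 - 8*n := by
  have h2 : 2 ∣ n := dvd_trans (by norm_num) h8
  have hg := grand h2 h3 (χ₀ n)
  rw [S0 h8, E0 h8 0, E0 h8 1, P0 h8] at hg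
  linarith

end Stmt12Aux

theorem stmt_12 (n : ℕ) [NeZero n] (h8 : 8 ∣ n) (h3 : ¬ (3 ∣ n)) :
    IsLeast {k : ℤ | ∃ χ : ZMod n → Fin 2, k = monoAPCount n χ}
      (((n : ℤ) ^ 2 - 8 * n) / 8) := by
  have h2 : 2 ∣ n := dvd_trans (by norm_num) h8
  constructor
  · refine ⟨Stmt12Aux.χ₀ n, ?_⟩
    have key := Stmt12Aux.upper (n := n) h8 h3
    obtain ⟨A, hA⟩ : ∃ A : ℤ, (n:ℤ)^2 - 8*(n:ℤ) = A := ⟨_, rfl⟩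
    rw [hA] at key ⊢
    omega
  · rintro k ⟨χ, rfl⟩
    have key := Stmt12Aux.lower h2 h3 χ
    obtain ⟨A, hA⟩ : ∃ A : ℤ, (n:ℤ)^2 - 8*(n:ℤ) = A := ⟨_, rfl⟩
    rw [hA] at key ⊢
    omega
end

section
/- Let n be a positive integer with n ≡ 0 (mod 8) and 3 ∤ n. Partition Z_n into G_1 = {0,...,n/4−1}, G_2 = {n/4,...,n/2−1}, G_3 = {n/2,...,3n/4−1}, G_4 = {3n/4,...,n−1}; color G_1 ∪ G_3 red and G_2 ∪ G_4 blue. Then the number of monochromatic 3-term arithmetic progressions in Z_n under this coloring equals (n^2 − 8n)/8. -/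
open Finset

open Finset

lemma modK2 {K y : ℕ} (h : y < 2*K) : y % K = if y < K then y else y - K := by
  split_ifs with h1
  · exact Nat.mod_eq_of_lt h1
  · rw [Nat.mod_eq_sub_mod (by omega)]; exact Nat.mod_eq_of_lt (by omega)

lemma modK3 {K y : ℕ} (h : y < 3*K) : y % K = if y < K then y else if y < 2*K then y - K else y - 2*K := by
  split_ifs with h1 h2
  · exact Nat.mod_eq_of_lt h1
  · rw [Nat.mod_eq_sub_mod (by omega)]; exact Nat.mod_eq_of_lt (by omega)
  · rw [Nat.mod_eq_sub_mod (show K ≤ y by omega)]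
    rw [Nat.mod_eq_sub_mod (show K ≤ y - K by omega)]
    rw [Nat.mod_eq_of_lt (show y - K - K < K by omega)]
    omega

lemma ite01 (p q : Prop) [Decidable p] [Decidable q] :
    ((if p then (0:Fin 2) else 1) = (if q then 0 else 1)) ↔ (p ↔ q) := by
  split_ifs with h1 h2 h2 <;> simp_all

lemma sum_range_mul' (c K : ℕ) (f : ℕ → ℕ) :
    ∑ x ∈ range (c*K), f x = ∑ u ∈ range c, ∑ r ∈ range K, f (u*K+r) := by
  induction c with
  | zero => simp
  | succ c ih => rw [Finset.sum_range_succ, ← ih, Nat.succ_mul, Finset.sum_range_add]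

lemma filter_add_lt_card (K c : ℕ) :
    ((range K).filter (fun r => r + c < K)).card = K - c := by
  have : ((range K).filter (fun r => r + c < K)) = range (K - c) := by
    ext x; simp; omega
  rw [this, card_range]

lemma filter_le_add_card (K c : ℕ) (hc : c ≤ 2*K) :
    ((range K).filter (fun r => 2*K ≤ r + c)).card = c - K := by
  have : ((range K).filter (fun r => 2*K ≤ r + c)) = Finset.Ico (2*K - c) K := by
    ext x; simp; omega
  rw [this, Nat.card_Ico]; omega

set_option maxHeartbeats 2000000 in
lemma count_lemma (m j : ℕ) (hm : 0 < m) (hj : j < 8*m) :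
    ((Finset.range (8*m)).filter (fun x =>
      ((x < 2*m ∨ (4*m ≤ x ∧ x < 6*m)) ↔
        ((x+j) % (8*m) < 2*m ∨ (4*m ≤ (x+j) % (8*m) ∧ (x+j) % (8*m) < 6*m)))
      ∧ (((x+j) % (8*m) < 2*m ∨ (4*m ≤ (x+j) % (8*m) ∧ (x+j) % (8*m) < 6*m)) ↔
        ((x+2*j) % (8*m) < 2*m ∨ (4*m ≤ (x+2*j) % (8*m) ∧ (x+2*j) % (8*m) < 6*m))))).card
    = 4 * (if (j / (2*m)) % 2 = 0 then 2*m - 2*(j % (2*m)) else 2*(j % (2*m)) - 2*m) := by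
  set t := j % (2*m) with ht
  set s := j / (2*m) with hs
  have hjd : j = s*(2*m) + t := by rw [Nat.mul_comm]; exact (Nat.div_add_mod j (2*m)).symm
  have htl : t < 2*m := Nat.mod_lt _ (by omega)
  have hsl : s < 4 := by
    by_contra hc
    have : 4*(2*m) ≤ s*(2*m) := Nat.mul_le_mul_right _ (by omega)
    omega
  clear_value t s
  -- pointwise description
  have key : ∀ u < 4, ∀ r < 2*m,
      (((u*(2*m)+r < 2*m ∨ (4*m ≤ u*(2*m)+r ∧ u*(2*m)+r < 6*m)) ↔
        ((u*(2*m)+r+j) % (8*m) < 2*m ∨ (4*m ≤ (u*(2*m)+r+j) % (8*m) ∧ (u*(2*m)+r+j) % (8*m) < 6*m)))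
      ∧ (((u*(2*m)+r+j) % (8*m) < 2*m ∨ (4*m ≤ (u*(2*m)+r+j) % (8*m) ∧ (u*(2*m)+r+j) % (8*m) < 6*m)) ↔
        ((u*(2*m)+r+2*j) % (8*m) < 2*m ∨ (4*m ≤ (u*(2*m)+r+2*j) % (8*m) ∧ (u*(2*m)+r+2*j) % (8*m) < 6*m))))
      ↔ (if s % 2 = 0 then r + 2*t < 2*m else 4*m ≤ r + 2*t) := by
    intro u hu r hr
    rw [modK2 (show u*(2*m)+r+j < 2*(8*m) by nlinarith),
        modK3 (show u*(2*m)+r+2*j < 3*(8*m) by nlinarith)]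
    rw [hjd]
    interval_cases u <;> interval_cases s <;> (split_ifs <;> (try contradiction) <;> omega)
  rw [Finset.card_filter, show range (8*m) = range (4*(2*m)) from by congr 1; ring,
    sum_range_mul' 4 (2*m)]
  have inner : ∀ u < 4, (∑ r ∈ range (2*m),
      (if ((u*(2*m)+r < 2*m ∨ (4*m ≤ u*(2*m)+r ∧ u*(2*m)+r < 6*m)) ↔
        ((u*(2*m)+r+j) % (8*m) < 2*m ∨ (4*m ≤ (u*(2*m)+r+j) % (8*m) ∧ (u*(2*m)+r+j) % (8*m) < 6*m)))
      ∧ (((u*(2*m)+r+j) % (8*m) < 2*m ∨ (4*m ≤ (u*(2*m)+r+j) % (8*m) ∧ (u*(2*m)+r+j) % (8*m) < 6*m)) ↔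
        ((u*(2*m)+r+2*j) % (8*m) < 2*m ∨ (4*m ≤ (u*(2*m)+r+2*j) % (8*m) ∧ (u*(2*m)+r+2*j) % (8*m) < 6*m)))
      then 1 else 0))
      = (if s % 2 = 0 then 2*m - 2*t else 2*t - 2*m) := by
    intro u hu
    have step : ∀ r ∈ range (2*m),
        (if ((u*(2*m)+r < 2*m ∨ (4*m ≤ u*(2*m)+r ∧ u*(2*m)+r < 6*m)) ↔
        ((u*(2*m)+r+j) % (8*m) < 2*m ∨ (4*m ≤ (u*(2*m)+r+j) % (8*m) ∧ (u*(2*m)+r+j) % (8*m) < 6*m)))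
      ∧ (((u*(2*m)+r+j) % (8*m) < 2*m ∨ (4*m ≤ (u*(2*m)+r+j) % (8*m) ∧ (u*(2*m)+r+j) % (8*m) < 6*m)) ↔
        ((u*(2*m)+r+2*j) % (8*m) < 2*m ∨ (4*m ≤ (u*(2*m)+r+2*j) % (8*m) ∧ (u*(2*m)+r+2*j) % (8*m) < 6*m)))
      then (1:ℕ) else 0)
        = (if (if s % 2 = 0 then r + 2*t < 2*m else 4*m ≤ r + 2*t) then 1 else 0) := by
      intro r hr
      simp only [Finset.mem_range] at hr
      exact if_congr (key u hu r hr) rfl rfl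
    rw [Finset.sum_congr rfl step]
    by_cases hpar : s % 2 = 0
    · simp only [hpar, if_true, reduceIte]
      rw [← Finset.card_filter]
      exact filter_add_lt_card (2*m) (2*t)
    · simp only [hpar, if_false, reduceIte]
      rw [← Finset.card_filter]
      have hset : (range (2*m)).filter (fun r => 4*m ≤ r + 2*t)
          = (range (2*m)).filter (fun r => 2*(2*m) ≤ r + 2*t) := by
        ext r; simp; omega
      rw [hset]
      exact filter_le_add_card (2*m) (2*t) (by omega)
  rw [Finset.sum_congr rfl (fun u hu => inner u (Finset.mem_range.mp hu))]
  simp [Finset.sum_const]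

lemma gauss2 (K : ℕ) : 2 * ∑ t ∈ range K, (K - t) = K * (K+1) := by
  have h1 : ∑ t ∈ range K, (K - t) = ∑ t ∈ range K, (t + 1) := by
    rw [← Finset.sum_range_reflect]
    exact Finset.sum_congr rfl (fun t ht => by simp at ht; omega)
  have h2 : ∑ t ∈ range K, (t+1) = ∑ i ∈ range (K+1), i := by
    rw [Finset.sum_range_succ' (fun i => i) K]; omega
  rw [h1, h2, Nat.mul_comm 2, Finset.sum_range_id_mul_two, Nat.mul_comm]
  simp

lemma sumA (m : ℕ) : ∑ t ∈ range (2*m), (2*m - 2*t) = m*(m+1) := by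
  have h0 : ∀ t, 2*m - 2*t = 2*(m-t) := fun t => by omega
  simp only [h0, ← Finset.mul_sum]
  have hsub : ∑ t ∈ range (2*m), (m - t) = ∑ t ∈ range m, (m - t) := by
    symm
    apply Finset.sum_subset (Finset.range_subset_range.2 (by omega))
    intro x hx hnx; simp at hx hnx ⊢; omega
  rw [hsub, gauss2]

lemma sumB (m : ℕ) : ∑ t ∈ range (2*m), (2*t - 2*m) = m*(m-1) := by
  have h1 : ∑ t ∈ range (2*m), (2*t - 2*m) = ∑ t ∈ range (2*m), (2*(m - 1 - t)) := by
    rw [← Finset.sum_range_reflect]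
    exact Finset.sum_congr rfl (fun t ht => by simp at ht; omega)
  rw [h1]
  simp only [← Finset.mul_sum]
  have hsub : ∑ t ∈ range (2*m), (m - 1 - t) = ∑ t ∈ range (m-1), ((m-1) - t) := by
    symm
    apply Finset.sum_subset (Finset.range_subset_range.2 (by omega))
    intro x hx hnx; simp at hx hnx ⊢; omega
  rw [hsub, gauss2]
  cases m with
  | zero => simp
  | succ p => simp only [Nat.add_sub_cancel]; ring

lemma three_cancel {n : ℕ} [NeZero n] (h3 : ¬ (3 ∣ n)) {x : ZMod n} (h : 3 * x = 0) : x = 0 := by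
  have hu : IsUnit ((3:ℕ) : ZMod n) :=
    (ZMod.isUnit_iff_coprime 3 n).mpr ((Nat.Prime.coprime_iff_not_dvd Nat.prime_three).mpr h3)
  have hu' : IsUnit ((3:ZMod n)) := by simpa using hu
  exact hu'.mul_left_cancel (by rw [h, mul_zero])

lemma ap_eq {n : ℕ} [NeZero n] (h3 : ¬ (3 ∣ n)) {a b a' b' : ZMod n}
    (hb : b ≠ 0) (h2b : 2*b ≠ 0) (hb' : b' ≠ 0) (h2b' : 2*b' ≠ 0)
    (h : ({a', a'+b', a'+2*b'} : Finset (ZMod n)) = {a, a+b, a+2*b}) :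
    (a' = a ∧ b' = b) ∨ (a' = a + 2*b ∧ b' = -b) := by
  have d1 : a ≠ a+b := fun hh => hb (by linear_combination -hh)
  have d2 : a ≠ a+2*b := fun hh => h2b (by linear_combination -hh)
  have d3 : a+b ≠ a+2*b := fun hh => hb (by linear_combination -hh)
  have d1' : a' ≠ a'+b' := fun hh => hb' (by linear_combination -hh)
  have d2' : a' ≠ a'+2*b' := fun hh => h2b' (by linear_combination -hh)
  have d3' : a'+b' ≠ a'+2*b' := fun hh => hb' (by linear_combination -hh)
  have hs1 : ∑ z ∈ ({a', a'+b', a'+2*b'} : Finset (ZMod n)), z = 3*(a'+b') := by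
    rw [Finset.sum_insert (by simp [d1', d2']), Finset.sum_insert (by simp [d3']),
      Finset.sum_singleton]
    ring
  have hs2 : ∑ z ∈ ({a, a+b, a+2*b} : Finset (ZMod n)), z = 3*(a+b) := by
    rw [Finset.sum_insert (by simp [d1, d2]), Finset.sum_insert (by simp [d3]),
      Finset.sum_singleton]
    ring
  have hse : 3*(a'+b') = 3*(a+b) := by rw [← hs1, ← hs2, h]
  have hmid : a' + b' = a + b := by
    have h30 : 3*((a'+b') - (a+b)) = 0 := by linear_combination hse
    have := three_cancel h3 h30
    linear_combination this
  have ha' : a' ∈ ({a, a+b, a+2*b} : Finset (ZMod n)) := h ▸ Finset.mem_insert_self a' _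
  simp only [Finset.mem_insert, Finset.mem_singleton] at ha'
  rcases ha' with rfl | rfl | rfl
  · exact Or.inl ⟨rfl, by linear_combination hmid⟩
  · exact absurd (show b' = 0 by linear_combination hmid) hb'
  · exact Or.inr ⟨rfl, by linear_combination hmid⟩

lemma twoToOne (n : ℕ) [NeZero n] (h3 : ¬ (3 ∣ n)) (χ : ZMod n → Fin 2) :
    2 * monoAPCount n χ =
      ((Finset.univ : Finset (ZMod n × ZMod n)).filter (fun p =>
        p.2 ≠ 0 ∧ 2*p.2 ≠ 0 ∧ χ p.1 = χ (p.1+p.2) ∧ χ (p.1+p.2) = χ (p.1+2*p.2))).card := by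
  classical
  set T := ((Finset.univ : Finset (ZMod n × ZMod n)).filter (fun p =>
        p.2 ≠ 0 ∧ 2*p.2 ≠ 0 ∧ χ p.1 = χ (p.1+p.2) ∧ χ (p.1+p.2) = χ (p.1+2*p.2))) with hT
  set φ : ZMod n × ZMod n → Finset (ZMod n) := fun p => {p.1, p.1+p.2, p.1+2*p.2} with hφ
  have hmemT : ∀ p : ZMod n × ZMod n, p ∈ T ↔
      (p.2 ≠ 0 ∧ 2*p.2 ≠ 0 ∧ χ p.1 = χ (p.1+p.2) ∧ χ (p.1+p.2) = χ (p.1+2*p.2)) := by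
    intro p; simp [hT]
  have himg : T.image φ = (apSets n).filter (fun s => ∀ x ∈ s, ∀ y ∈ s, χ x = χ y) := by
    ext s
    simp only [Finset.mem_image, Finset.mem_filter, apSets, Finset.mem_univ, true_and]
    constructor
    · rintro ⟨⟨a,b⟩, hp, rfl⟩
      obtain ⟨hb, h2b, e1, e2⟩ := (hmemT _).mp hp
      simp only [hφ] at *
      have d1 : a ≠ a+b := fun hh => hb (by linear_combination -hh)
      have d2 : a ≠ a+2*b := fun hh => h2b (by linear_combination -hh)
      have d3 : a+b ≠ a+2*b := fun hh => hb (by linear_combination -hh)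
      have hcard : ({a, a+b, a+2*b} : Finset (ZMod n)).card = 3 := by
        rw [Finset.card_insert_of_notMem (by simp [d1, d2]),
          Finset.card_insert_of_notMem (by simp [d3]), Finset.card_singleton]
      refine ⟨⟨⟨a, b, hb, rfl⟩, hcard⟩, ?_⟩
      intro x hx y hy
      have e3 : χ a = χ (a+2*b) := e1.trans e2
      simp only [Finset.mem_insert, Finset.mem_singleton] at hx hy
      rcases hx with rfl | rfl | rfl <;> rcases hy with rfl | rfl | rfl <;>
        first | rfl | exact e1 | exact e2 | exact e3 | exact e1.symm | exact e2.symm | exact e3.symm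
    · rintro ⟨⟨⟨a, b, hb, rfl⟩, hcard⟩, hmono⟩
      have h2b : 2*b ≠ 0 := by
        intro h2
        have hz : a + 2*b = a := by rw [h2, add_zero]
        rw [hz] at hcard
        have hsub : ({a, a+b, a} : Finset (ZMod n)) = {a, a+b} := by
          ext x; simp; tauto
        rw [hsub] at hcard
        have := Finset.card_insert_le a ({a+b} : Finset (ZMod n))
        simp at this
        omega
      refine ⟨(a, b), (hmemT _).mpr ⟨hb, h2b, ?_, ?_⟩, rfl⟩
      · exact hmono a (by simp) (a+b) (by simp)
      · exact hmono (a+b) (by simp) (a+2*b) (by simp)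
  have hfib : ∀ s ∈ T.image φ, (T.filter (fun p => φ p = s)).card = 2 := by
    intro s hs
    obtain ⟨⟨a, b⟩, hpT, rfl⟩ := Finset.mem_image.mp hs
    obtain ⟨hb, h2b, e1, e2⟩ := (hmemT _).mp hpT
    have hbne : b ≠ -b := by
      intro hh; exact h2b (by linear_combination hh)
    have hset : T.filter (fun p => φ p = φ (a, b)) = {(a, b), (a + 2*b, -b)} := by
      ext ⟨a', b'⟩
      simp only [Finset.mem_filter, Finset.mem_insert, Finset.mem_singleton, Prod.mk.injEq]
      constructor
      · rintro ⟨hmem, heq⟩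
        obtain ⟨hb', h2b', _, _⟩ := (hmemT _).mp hmem
        have := ap_eq h3 hb h2b hb' h2b' (by simpa [hφ] using heq)
        tauto
      · rintro (⟨rfl, rfl⟩ | ⟨rfl, rfl⟩)
        · exact ⟨hpT, rfl⟩
        · have k1 : a + 2*b + -b = a + b := by ring
          have k2 : a + 2*b + 2*(-b) = a := by ring
          refine ⟨(hmemT _).mpr ⟨by simpa using hb, ?_, ?_, ?_⟩, ?_⟩
          · intro hh
            exact h2b (by linear_combination -hh)
          · rw [k1]; exact e2.symm
          · rw [k1, k2]; exact e1.symm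
          · simp only [hφ, k1, k2]
            ext x; simp; tauto
    rw [hset, Finset.card_insert_of_notMem (by simp [Prod.ext_iff]; intro h1 h2; exact absurd h2 hbne),
      Finset.card_singleton]
  have hTcard : T.card = ∑ s ∈ T.image φ, (T.filter (fun p => φ p = s)).card :=
    Finset.card_eq_sum_card_fiberwise (fun p hp => Finset.mem_image_of_mem φ hp)
  rw [Finset.sum_congr rfl hfib, Finset.sum_const, smul_eq_mul] at hTcard
  rw [monoAPCount, ← himg, hTcard, Nat.mul_comm]

set_option maxHeartbeats 1000000 in
theorem stmt_13 (n : ℕ) [NeZero n] (h8 : 8 ∣ n) (h3 : ¬ (3 ∣ n)) :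
    monoAPCount n (fun i =>
        if i.val < n / 4 ∨ (n / 2 ≤ i.val ∧ i.val < 3 * n / 4) then 0 else 1) =
      (n ^ 2 - 8 * n) / 8 := by
  obtain ⟨m, rfl⟩ := h8
  have hm : 0 < m := by
    have h0 := NeZero.ne (8*m)
    omega
  simp only [show 8*m/4 = 2*m from by omega, show 8*m/2 = 4*m from by omega,
    show 3*(8*m)/4 = 6*m from by omega]
  set χ : ZMod (8*m) → Fin 2 :=
    fun i => if i.val < 2*m ∨ (4*m ≤ i.val ∧ i.val < 6*m) then 0 else 1 with hχ
  have hcastval : ∀ x : ZMod (8*m), ((x.val : ℕ) : ZMod (8*m)) = x := fun x => by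
    rw [ZMod.natCast_val, ZMod.cast_id]
  have h2to1 := twoToOne (8*m) h3 χ
  set G : ℕ → ℕ := fun j => if j = 0 ∨ j = 4*m then 0 else
    4 * (if (j/(2*m))%2 = 0 then 2*m - 2*(j%(2*m)) else 2*(j%(2*m)) - 2*m) with hG
  set g : ℕ → ℕ := fun j =>
    4 * (if (j/(2*m))%2 = 0 then 2*m - 2*(j%(2*m)) else 2*(j%(2*m)) - 2*m) with hg
  -- fiberwise decomposition over b
  have hfiber : ((Finset.univ : Finset (ZMod (8*m) × ZMod (8*m))).filter (fun p =>
        p.2 ≠ 0 ∧ 2*p.2 ≠ 0 ∧ χ p.1 = χ (p.1+p.2) ∧ χ (p.1+p.2) = χ (p.1+2*p.2))).card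
      = ∑ b ∈ (Finset.univ : Finset (ZMod (8*m))),
          ((Finset.univ : Finset (ZMod (8*m))).filter (fun a =>
            b ≠ 0 ∧ 2*b ≠ 0 ∧ χ a = χ (a+b) ∧ χ (a+b) = χ (a+2*b))).card := by
    rw [Finset.card_eq_sum_card_fiberwise (f := Prod.snd)
      (t := (Finset.univ : Finset (ZMod (8*m)))) (fun p _ => Finset.mem_univ _)]
    apply Finset.sum_congr rfl
    intro b _
    apply Finset.card_nbij' (i := fun p => p.1) (j := fun a => (a, b))
    · rintro ⟨x, y⟩ hp
      simp only [Finset.coe_filter, Finset.mem_coe, Set.mem_setOf_eq, Finset.mem_filter, Finset.mem_univ, true_and] at hp ⊢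
      obtain ⟨h1, rfl⟩ := hp
      exact h1
    · intro a ha
      simp only [Finset.coe_filter, Finset.mem_coe, Set.mem_setOf_eq, Finset.mem_filter, Finset.mem_univ, true_and] at ha ⊢
      exact ⟨ha, trivial⟩
    · rintro ⟨x, y⟩ hp
      simp only [Finset.coe_filter, Finset.mem_coe, Set.mem_setOf_eq, Finset.mem_filter, Finset.mem_univ, true_and] at hp
      obtain ⟨h1, rfl⟩ := hp
      rfl
    · intro a ha
      rfl
  -- per-b evaluation
  have hperb : ∀ b : ZMod (8*m),
      ((Finset.univ : Finset (ZMod (8*m))).filter (fun a =>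
        b ≠ 0 ∧ 2*b ≠ 0 ∧ χ a = χ (a+b) ∧ χ (a+b) = χ (a+2*b))).card = G b.val := by
    intro b
    have hjlt : b.val < 8*m := ZMod.val_lt b
    have hval1 : ∀ a : ZMod (8*m), (a+b).val = (a.val + b.val) % (8*m) :=
      fun a => ZMod.val_add a b
    have hval2 : ∀ a : ZMod (8*m), (a+2*b).val = (a.val + 2*b.val) % (8*m) := by
      intro a
      rw [two_mul, ← add_assoc, ZMod.val_add, ZMod.val_add, Nat.mod_add_mod,
        show a.val + b.val + b.val = a.val + 2*b.val from by ring]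
    have hb0 : (b = 0) ↔ b.val = 0 := (ZMod.val_eq_zero b).symm
    have h2b0 : (2*b = 0) ↔ (b.val = 0 ∨ b.val = 4*m) := by
      rw [two_mul]
      constructor
      · intro h
        have hv := congrArg ZMod.val h
        rw [ZMod.val_add, ZMod.val_zero] at hv
        rw [modK2 (show b.val + b.val < 2*(8*m) by omega)] at hv
        split_ifs at hv <;> omega
      · rintro (h | h)
        · rw [(hb0.mpr h : b = 0), add_zero]
        · have hbeq : b = ((4*m : ℕ) : ZMod (8*m)) := by rw [← hcastval b, h]
          rw [hbeq, ← Nat.cast_add, show 4*m+4*m = 8*m from by ring, ZMod.natCast_self]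
    have hiff : ∀ a : ZMod (8*m),
        (b ≠ 0 ∧ 2*b ≠ 0 ∧ χ a = χ (a+b) ∧ χ (a+b) = χ (a+2*b)) ↔
        (b.val ≠ 0 ∧ b.val ≠ 4*m ∧
          (((a.val < 2*m ∨ (4*m ≤ a.val ∧ a.val < 6*m)) ↔
            ((a.val+b.val)%(8*m) < 2*m ∨
              (4*m ≤ (a.val+b.val)%(8*m) ∧ (a.val+b.val)%(8*m) < 6*m)))
          ∧ (((a.val+b.val)%(8*m) < 2*m ∨
              (4*m ≤ (a.val+b.val)%(8*m) ∧ (a.val+b.val)%(8*m) < 6*m)) ↔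
            ((a.val+2*b.val)%(8*m) < 2*m ∨
              (4*m ≤ (a.val+2*b.val)%(8*m) ∧ (a.val+2*b.val)%(8*m) < 6*m))))) := by
      intro a
      constructor
      · rintro ⟨hb, h2b, e1, e2⟩
        refine ⟨fun h => hb (hb0.mpr h), fun h => h2b (h2b0.mpr (Or.inr h)), ?_, ?_⟩
        · have := e1; simp only [hχ] at this; rw [hval1] at this
          exact (ite01 _ _).mp this
        · have := e2; simp only [hχ] at this; rw [hval1, hval2] at this
          exact (ite01 _ _).mp this
      · rintro ⟨h1, h2, e1, e2⟩
        refine ⟨fun h => h1 (hb0.mp h), fun h => ?_, ?_, ?_⟩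
        · rcases h2b0.mp h with h' | h'
          · exact h1 h'
          · exact h2 h'
        · simp only [hχ]; rw [hval1]; exact (ite01 _ _).mpr e1
        · simp only [hχ]; rw [hval1, hval2]; exact (ite01 _ _).mpr e2
    have hcard : ((Finset.univ : Finset (ZMod (8*m))).filter (fun a =>
          b ≠ 0 ∧ 2*b ≠ 0 ∧ χ a = χ (a+b) ∧ χ (a+b) = χ (a+2*b))).card
        = ((Finset.range (8*m)).filter (fun x =>
            b.val ≠ 0 ∧ b.val ≠ 4*m ∧
            (((x < 2*m ∨ (4*m ≤ x ∧ x < 6*m)) ↔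
              ((x+b.val)%(8*m) < 2*m ∨
                (4*m ≤ (x+b.val)%(8*m) ∧ (x+b.val)%(8*m) < 6*m)))
            ∧ (((x+b.val)%(8*m) < 2*m ∨
                (4*m ≤ (x+b.val)%(8*m) ∧ (x+b.val)%(8*m) < 6*m)) ↔
              ((x+2*b.val)%(8*m) < 2*m ∨
                (4*m ≤ (x+2*b.val)%(8*m) ∧ (x+2*b.val)%(8*m) < 6*m)))))).card := by
      apply Finset.card_nbij' (i := fun a => a.val) (j := fun x => ((x : ℕ) : ZMod (8*m)))
      · intro a ha
        simp only [Finset.coe_filter, Finset.mem_coe, Set.mem_setOf_eq, Finset.mem_filter, Finset.mem_univ, true_and] at ha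
        simp only [Finset.coe_filter, Finset.mem_coe, Set.mem_setOf_eq, Finset.mem_filter, Finset.mem_range]
        exact ⟨ZMod.val_lt a, (hiff a).mp ha⟩
      · intro x hx
        simp only [Finset.coe_filter, Finset.mem_coe, Set.mem_setOf_eq, Finset.mem_filter, Finset.mem_range] at hx
        obtain ⟨hlt, hx⟩ := hx
        simp only [Finset.coe_filter, Finset.mem_coe, Set.mem_setOf_eq, Finset.mem_filter, Finset.mem_univ, true_and]
        apply (hiff _).mpr
        rwa [ZMod.val_cast_of_lt hlt]
      · intro a _
        exact hcastval a
      · intro x hx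
        simp only [Finset.coe_filter, Finset.mem_coe, Set.mem_setOf_eq, Finset.mem_filter, Finset.mem_range] at hx
        exact ZMod.val_cast_of_lt hx.1
    rw [hcard]
    by_cases hz : b.val = 0 ∨ b.val = 4*m
    · simp only [hG]
      rw [if_pos hz, Finset.card_eq_zero]
      apply Finset.filter_false_of_mem
      rintro x _ ⟨hj0, hj4, _⟩
      rcases hz with h | h
      · exact hj0 h
      · exact hj4 h
    · push_neg at hz
      obtain ⟨hz0, hz4⟩ := hz
      have hfeq : ((Finset.range (8*m)).filter (fun x =>
          b.val ≠ 0 ∧ b.val ≠ 4*m ∧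
            (((x < 2*m ∨ (4*m ≤ x ∧ x < 6*m)) ↔
              ((x+b.val)%(8*m) < 2*m ∨
                (4*m ≤ (x+b.val)%(8*m) ∧ (x+b.val)%(8*m) < 6*m)))
            ∧ (((x+b.val)%(8*m) < 2*m ∨
                (4*m ≤ (x+b.val)%(8*m) ∧ (x+b.val)%(8*m) < 6*m)) ↔
              ((x+2*b.val)%(8*m) < 2*m ∨
                (4*m ≤ (x+2*b.val)%(8*m) ∧ (x+2*b.val)%(8*m) < 6*m))))))
          = ((Finset.range (8*m)).filter (fun x =>
            (((x < 2*m ∨ (4*m ≤ x ∧ x < 6*m)) ↔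
              ((x+b.val)%(8*m) < 2*m ∨
                (4*m ≤ (x+b.val)%(8*m) ∧ (x+b.val)%(8*m) < 6*m)))
            ∧ (((x+b.val)%(8*m) < 2*m ∨
                (4*m ≤ (x+b.val)%(8*m) ∧ (x+b.val)%(8*m) < 6*m)) ↔
              ((x+2*b.val)%(8*m) < 2*m ∨
                (4*m ≤ (x+2*b.val)%(8*m) ∧ (x+2*b.val)%(8*m) < 6*m)))))) := by
        apply Finset.filter_congr
        intro x _
        simp [hz0, hz4]
      rw [hfeq, count_lemma m b.val hm hjlt]
      simp only [hG]
      rw [if_neg (not_or.mpr ⟨hz0, hz4⟩)]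
  -- sum over b equals sum over range
  have hsum1 : ∑ b ∈ (Finset.univ : Finset (ZMod (8*m))), G b.val
      = ∑ j ∈ Finset.range (8*m), G j := by
    apply Finset.sum_nbij' (i := fun b => b.val) (j := fun x => ((x : ℕ) : ZMod (8*m)))
    · intro b _
      exact Finset.mem_range.mpr (ZMod.val_lt b)
    · intro x _
      exact Finset.mem_univ _
    · intro b _
      exact hcastval b
    · intro x hx
      exact ZMod.val_cast_of_lt (Finset.mem_range.mp hx)
    · intro b _
      rfl
  -- evaluate the grand sum
  have hg0 : g 0 = 8*m := by
    simp only [hg, Nat.zero_div, Nat.zero_mod]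
    simp <;> omega
  have hg4 : g (4*m) = 8*m := by
    have hd : (4*m)/(2*m) = 2 := by
      rw [show 4*m = 2*(2*m) from by ring]
      exact Nat.mul_div_cancel 2 (by omega)
    have hmod : (4*m)%(2*m) = 0 := by
      rw [modK3 (by omega)]
      split_ifs <;> omega
    simp only [hg, hd, hmod]
    simp <;> omega
  have hmem0 : (0:ℕ) ∈ Finset.range (8*m) := Finset.mem_range.mpr (by omega)
  have hmem4 : 4*m ∈ (Finset.range (8*m)).erase 0 :=
    Finset.mem_erase.mpr ⟨by omega, Finset.mem_range.mpr (by omega)⟩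
  have hmain : ∑ j ∈ Finset.range (8*m), g j = 16*(m*m) := by
    rw [show Finset.range (8*m) = Finset.range (4*(2*m)) from by congr 1; ring,
      sum_range_mul' 4 (2*m)]
    have hin : ∀ u : ℕ, ∀ r ∈ Finset.range (2*m),
        g (u*(2*m)+r) = 4*(if u%2 = 0 then 2*m - 2*r else 2*r - 2*m) := by
      intro u r hr
      simp only [Finset.mem_range] at hr
      have hd : (u*(2*m)+r)/(2*m) = u := by
        rw [Nat.mul_comm u, Nat.mul_add_div (by omega), Nat.div_eq_of_lt hr, add_zero]
      have hmod : (u*(2*m)+r)%(2*m) = r := by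
        rw [Nat.mul_comm u, Nat.mul_add_mod]
        exact Nat.mod_eq_of_lt hr
      simp only [hg, hd, hmod]
    rw [Finset.sum_range_succ, Finset.sum_range_succ, Finset.sum_range_succ,
      Finset.sum_range_succ, Finset.sum_range_zero]
    rw [Finset.sum_congr rfl (hin 0), Finset.sum_congr rfl (hin 1),
      Finset.sum_congr rfl (hin 2), Finset.sum_congr rfl (hin 3)]
    have hA0 : ∑ r ∈ Finset.range (2*m),
        (4*(if (0:ℕ)%2 = 0 then 2*m - 2*r else 2*r - 2*m)) = 4*(m*(m+1)) := by
      have he : ∀ r ∈ Finset.range (2*m),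
          (4*(if (0:ℕ)%2 = 0 then 2*m - 2*r else 2*r - 2*m)) = 4*(2*m - 2*r) :=
        fun r _ => by norm_num
      rw [Finset.sum_congr rfl he, ← Finset.mul_sum, sumA]
    have hA1 : ∑ r ∈ Finset.range (2*m),
        (4*(if (1:ℕ)%2 = 0 then 2*m - 2*r else 2*r - 2*m)) = 4*(m*(m-1)) := by
      have he : ∀ r ∈ Finset.range (2*m),
          (4*(if (1:ℕ)%2 = 0 then 2*m - 2*r else 2*r - 2*m)) = 4*(2*r - 2*m) :=
        fun r _ => by norm_num
      rw [Finset.sum_congr rfl he, ← Finset.mul_sum, sumB]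
    have hA2 : ∑ r ∈ Finset.range (2*m),
        (4*(if (2:ℕ)%2 = 0 then 2*m - 2*r else 2*r - 2*m)) = 4*(m*(m+1)) := by
      have he : ∀ r ∈ Finset.range (2*m),
          (4*(if (2:ℕ)%2 = 0 then 2*m - 2*r else 2*r - 2*m)) = 4*(2*m - 2*r) :=
        fun r _ => by norm_num
      rw [Finset.sum_congr rfl he, ← Finset.mul_sum, sumA]
    have hA3 : ∑ r ∈ Finset.range (2*m),
        (4*(if (3:ℕ)%2 = 0 then 2*m - 2*r else 2*r - 2*m)) = 4*(m*(m-1)) := by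
      have he : ∀ r ∈ Finset.range (2*m),
          (4*(if (3:ℕ)%2 = 0 then 2*m - 2*r else 2*r - 2*m)) = 4*(2*r - 2*m) :=
        fun r _ => by norm_num
      rw [Finset.sum_congr rfl he, ← Finset.mul_sum, sumB]
    rw [hA0, hA1]
    try rw [hA2]
    try rw [hA3]
    cases m with
    | zero => simp
    | succ p => simp only [Nat.add_sub_cancel]; ring
  have hGsum : ∑ j ∈ Finset.range (8*m), G j = 16*(m*m) - 16*m := by
    have e1 := Finset.sum_erase_add (Finset.range (8*m)) g hmem0
    have e2 := Finset.sum_erase_add ((Finset.range (8*m)).erase 0) g hmem4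
    have e3 := Finset.sum_erase_add (Finset.range (8*m)) G hmem0
    have e4 := Finset.sum_erase_add ((Finset.range (8*m)).erase 0) G hmem4
    have hG0 : G 0 = 0 := by simp [hG]
    have hG4 : G (4*m) = 0 := by simp [hG]
    have hcongr : ∑ j ∈ ((Finset.range (8*m)).erase 0).erase (4*m), G j
        = ∑ j ∈ ((Finset.range (8*m)).erase 0).erase (4*m), g j := by
      apply Finset.sum_congr rfl
      intro j hj
      simp only [Finset.mem_erase] at hj
      simp only [hG, hg]
      rw [if_neg (not_or.mpr ⟨hj.2.1, hj.1⟩)]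
    have hmle : 16*m ≤ 16*(m*m) := by
      have : m ≤ m*m := by nlinarith
      omega
    omega
  -- assemble
  have hfinal : 2 * monoAPCount (8*m) χ = 16*(m*m) - 16*m := by
    rw [h2to1, hfiber, Finset.sum_congr rfl (fun b _ => hperb b), hsum1, hGsum]
  have hpow : (8*m)^2 = 64*(m*m) := by ring
  rw [hpow]
  have hmle : m ≤ m*m := by nlinarith
  omega
end
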